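/- arXiv:math/0501167 — 9 statements merged into one kernel-verified Lean document; each statement's English description precedes it below -/
import Mathlib

section
/- Let a : {0,…,m} → ℝ and b : {0,…,k} → ℝ be the (finite) coefficient sequences of two tropical polynomials, and let c : {0,…,m+k} → ℝ, c_j = min_{i}(a_i + b_{j−i}), be their min-plus convolution. Then the greatest convex minorant of c equals the min-plus convolution of the greatest convex minorant of a with the greatest convex minorant of b. (The greatest convex minorant of a finite sequence d : {0,…,N} → ℝ is the pointwise largest sequence ď with ď ≤ d pointwise whose successive differences ď_{i+1} − ď_i are nondecreasing in i.) -/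
/-- Min-plus (tropical) convolution of a sequence `a` supported on `{0,…,m}` with a
sequence `b` supported on `{0,…,k}`: `c j = min_i (a i + b (j - i))`. -/
noncomputable def tropConv (m k : ℕ) (a b : ℕ → ℝ) (j : ℕ) : ℝ :=
  sInf {x : ℝ | ∃ i : ℕ, i ≤ m ∧ i ≤ j ∧ j - i ≤ k ∧ x = a i + b (j - i)}

/-- `e` is the greatest convex minorant of `d` on `{0,…,N}`: it is pointwise `≤ d`,
its successive differences are nondecreasing, and it is pointwise greatest with
these two properties. -/
def IsGCM (N : ℕ) (d e : ℕ → ℝ) : Prop :=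
  (∀ i ≤ N, e i ≤ d i) ∧
  (∀ i, i + 2 ≤ N → e (i + 1) - e i ≤ e (i + 2) - e (i + 1)) ∧
  (∀ f : ℕ → ℝ, (∀ i ≤ N, f i ≤ d i) →
    (∀ i, i + 2 ≤ N → f (i + 1) - f i ≤ f (i + 2) - f (i + 1)) →
    ∀ i ≤ N, f i ≤ e i)

lemma tropConv_eq (m k : ℕ) (a b : ℕ → ℝ) (j : ℕ) (hj : j ≤ m + k) :
    tropConv m k a b j =
      (Finset.Icc (j - k) (min m j)).inf'
        (Finset.nonempty_Icc.mpr (by omega)) (fun i => a i + b (j - i)) := by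
  rw [Finset.inf'_eq_csInf_image]
  unfold tropConv
  congr 1
  ext x
  simp only [Set.mem_setOf_eq, Set.mem_image, Finset.mem_coe, Finset.mem_Icc]
  constructor
  · rintro ⟨i, h1, h2, h3, rfl⟩
    exact ⟨i, ⟨by omega, by omega⟩, rfl⟩
  · rintro ⟨i, ⟨h1, h2⟩, rfl⟩
    exact ⟨i, by omega, by omega, by omega, rfl⟩

lemma tropConv_le (m k : ℕ) (a b : ℕ → ℝ) (j i : ℕ)
    (h1 : i ≤ m) (h2 : i ≤ j) (h3 : j - i ≤ k) :
    tropConv m k a b j ≤ a i + b (j - i) := by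
  rw [tropConv_eq m k a b j (by omega)]
  exact Finset.inf'_le _ (Finset.mem_Icc.mpr ⟨by omega, by omega⟩)

/-- Monotonicity of successive differences for a convex sequence. -/
lemma slope_mono {N : ℕ} {e : ℕ → ℝ}
    (h : ∀ i, i + 2 ≤ N → e (i + 1) - e i ≤ e (i + 2) - e (i + 1)) :
    ∀ i j, i ≤ j → j + 1 ≤ N → e (i + 1) - e i ≤ e (j + 1) - e j := by
  intro i j hij
  induction j with
  | zero =>
    intro _
    have : i = 0 := Nat.le_zero.mp hij
    simp [this]
  | succ n ih =>
    intro hN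
    rcases Nat.eq_or_lt_of_le hij with heq | hlt
    · rw [heq]
    · have h1 := ih (by omega) (by omega)
      have h2 := h n (by omega)
      have e1 : n + 1 + 1 = n + 2 := by omega
      rw [e1]
      linarith

/-- A sup of shifts of a convex sequence minus constants is convex. -/
lemma sup'_shift_convex (M K : ℕ) (g h : ℕ → ℝ)
    (hg : ∀ i, i + 2 ≤ M + K → g (i + 1) - g i ≤ g (i + 2) - g (i + 1))
    (i : ℕ) (hi : i + 2 ≤ M) :
    (Finset.range (K + 1)).sup' Finset.nonempty_range_add_one (fun l => g (i + 1 + l) - h l) -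
      (Finset.range (K + 1)).sup' Finset.nonempty_range_add_one (fun l => g (i + l) - h l) ≤
    (Finset.range (K + 1)).sup' Finset.nonempty_range_add_one (fun l => g (i + 2 + l) - h l) -
      (Finset.range (K + 1)).sup' Finset.nonempty_range_add_one (fun l => g (i + 1 + l) - h l) := by
  obtain ⟨l, hl, hleq⟩ := Finset.exists_mem_eq_sup'
    (Finset.nonempty_range_add_one : (Finset.range (K + 1)).Nonempty)
    (fun l => g (i + 1 + l) - h l)
  have hlK : l ≤ K := by simpa using Nat.lt_succ_iff.mp (Finset.mem_range.mp hl)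
  have h0 : g (i + l) - h l ≤
      (Finset.range (K + 1)).sup' Finset.nonempty_range_add_one (fun l => g (i + l) - h l) :=
    Finset.le_sup' (fun l => g (i + l) - h l) hl
  have h2 : g (i + 2 + l) - h l ≤
      (Finset.range (K + 1)).sup' Finset.nonempty_range_add_one (fun l => g (i + 2 + l) - h l) :=
    Finset.le_sup' (fun l => g (i + 2 + l) - h l) hl
  have hmid := hg (i + l) (by omega)
  have e1 : i + l + 1 = i + 1 + l := by omega
  have e2 : i + l + 2 = i + 2 + l := by omega
  rw [e1, e2] at hmid
  linarith [hleq ▸ le_refl ((Finset.range (K + 1)).sup' Finset.nonempty_range_add_one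
    (fun l => g (i + 1 + l) - h l)), hleq]

/-- The min-plus convolution of convex sequences is convex. -/
lemma tropConv_convex (m k : ℕ) (ga gb : ℕ → ℝ)
    (hga : ∀ i, i + 2 ≤ m → ga (i + 1) - ga i ≤ ga (i + 2) - ga (i + 1))
    (hgb : ∀ i, i + 2 ≤ k → gb (i + 1) - gb i ≤ gb (i + 2) - gb (i + 1))
    (j : ℕ) (hj : j + 2 ≤ m + k) :
    tropConv m k ga gb (j + 1) - tropConv m k ga gb j ≤
      tropConv m k ga gb (j + 2) - tropConv m k ga gb (j + 1) := by
  -- minimizers for j and j+2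
  obtain ⟨x1, hx1mem, hx1⟩ := Finset.exists_mem_eq_inf'
    (Finset.nonempty_Icc.mpr (by omega : j - k ≤ min m j))
    (fun i => ga i + gb (j - i))
  obtain ⟨x2, hx2mem, hx2⟩ := Finset.exists_mem_eq_inf'
    (Finset.nonempty_Icc.mpr (by omega : j + 2 - k ≤ min m (j + 2)))
    (fun i => ga i + gb (j + 2 - i))
  rw [Finset.mem_Icc] at hx1mem hx2mem
  have hCj : tropConv m k ga gb j = ga x1 + gb (j - x1) := by
    rw [tropConv_eq m k ga gb j (by omega)]; exact hx1
  have hCj2 : tropConv m k ga gb (j + 2) = ga x2 + gb (j + 2 - x2) := by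
    rw [tropConv_eq m k ga gb (j + 2) (by omega)]; exact hx2
  -- y coordinates
  obtain ⟨y1, hy1⟩ : ∃ y1, j = x1 + y1 := ⟨j - x1, by omega⟩
  obtain ⟨y2, hy2⟩ : ∃ y2, j + 2 = x2 + y2 := ⟨j + 2 - x2, by omega⟩
  have hy1k : y1 ≤ k := by omega
  have hy2k : y2 ≤ k := by omega
  have hx1m : x1 ≤ m := by omega
  have hx2m : x2 ≤ m := by omega
  rw [show j - x1 = y1 by omega] at hCj
  rw [show j + 2 - x2 = y2 by omega] at hCj2
  by_cases hcase : x2 ≤ x1 + 1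
  · -- then y2 ≥ y1 + 1; use indices x1 and x2 for j+1
    have hy12 : y1 + 1 ≤ y2 := by omega
    have hA1 : tropConv m k ga gb (j + 1) ≤ ga x1 + gb (y1 + 1) := by
      have := tropConv_le m k ga gb (j + 1) x1 hx1m (by omega) (by omega)
      rwa [show j + 1 - x1 = y1 + 1 by omega] at this
    have hA2 : tropConv m k ga gb (j + 1) ≤ ga x2 + gb (y2 - 1) := by
      have := tropConv_le m k ga gb (j + 1) x2 hx2m (by omega) (by omega)
      rwa [show j + 1 - x2 = y2 - 1 by omega] at this
    -- slope of gb at y1 ≤ slope at y2 - 1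
    rcases Nat.eq_or_lt_of_le hy12 with heq | hlt
    · -- y2 = y1 + 1 : then gb(y1+1) = gb y2, gb(y2-1) = gb y1
      rw [← heq] at hA2 hCj2
      rw [show y1 + 1 - 1 = y1 by omega] at hA2
      linarith
    · have hs := slope_mono hgb y1 (y2 - 1) (by omega) (by omega)
      rw [show y2 - 1 + 1 = y2 by omega] at hs
      linarith
  · -- x2 ≥ x1 + 2 : use indices x1 + 1 and x2 - 1 for j+1
    have hA1 : tropConv m k ga gb (j + 1) ≤ ga (x1 + 1) + gb y1 := by
      have := tropConv_le m k ga gb (j + 1) (x1 + 1) (by omega) (by omega) (by omega)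
      rwa [show j + 1 - (x1 + 1) = y1 by omega] at this
    have hA2 : tropConv m k ga gb (j + 1) ≤ ga (x2 - 1) + gb y2 := by
      have := tropConv_le m k ga gb (j + 1) (x2 - 1) (by omega) (by omega) (by omega)
      rwa [show j + 1 - (x2 - 1) = y2 by omega] at this
    have hs := slope_mono hga x1 (x2 - 1) (by omega) (by omega)
    rw [show x2 - 1 + 1 = x2 by omega] at hs
    linarith

/-- The greatest convex minorant of the min-plus convolution of two finite real
sequences is the min-plus convolution of their greatest convex minorants. -/
theorem gcm_tropConv (m k : ℕ) (a b c ga gb gc : ℕ → ℝ)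
    (hc : ∀ j ≤ m + k, c j = tropConv m k a b j)
    (hga : IsGCM m a ga) (hgb : IsGCM k b gb) (hgc : IsGCM (m + k) c gc) :
    ∀ j ≤ m + k, gc j = tropConv m k ga gb j := by
  obtain ⟨hga1, hga2, hga3⟩ := hga
  obtain ⟨hgb1, hgb2, hgb3⟩ := hgb
  obtain ⟨hgc1, hgc2, hgc3⟩ := hgc
  -- C := tropConv ga gb is a convex minorant of c, so C ≤ gc
  have hCle : ∀ j ≤ m + k, tropConv m k ga gb j ≤ c j := by
    intro j hj
    rw [hc j hj, tropConv_eq m k a b j hj]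
    apply Finset.le_inf'
    intro i hi
    rw [Finset.mem_Icc] at hi
    calc tropConv m k ga gb j ≤ ga i + gb (j - i) :=
          tropConv_le m k ga gb j i (by omega) (by omega) (by omega)
      _ ≤ a i + b (j - i) :=
          add_le_add (hga1 i (by omega)) (hgb1 (j - i) (by omega))
  have hCgc : ∀ j ≤ m + k, tropConv m k ga gb j ≤ gc j :=
    hgc3 (fun j => tropConv m k ga gb j) hCle (tropConv_convex m k ga gb hga2 hgb2)
  -- Phase A: φ i := sup_l (gc (i + l) - b l) is a convex minorant of a
  set φ : ℕ → ℝ := fun i =>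
    (Finset.range (k + 1)).sup' Finset.nonempty_range_add_one (fun l => gc (i + l) - b l)
    with hφ
  have hφmin : ∀ i ≤ m, φ i ≤ a i := by
    intro i hi
    apply Finset.sup'_le
    intro l hl
    rw [Finset.mem_range] at hl
    have hlk : l ≤ k := by omega
    have h1 : gc (i + l) ≤ c (i + l) := hgc1 (i + l) (by omega)
    have h2 : c (i + l) ≤ a i + b l := by
      rw [hc (i + l) (by omega)]
      have := tropConv_le m k a b (i + l) i hi (by omega) (by omega)
      rwa [show i + l - i = l by omega] at this
    linarith
  have hφconv : ∀ i, i + 2 ≤ m → φ (i + 1) - φ i ≤ φ (i + 2) - φ (i + 1) := by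
    intro i hi
    exact sup'_shift_convex m k gc b hgc2 i hi
  have hφga : ∀ i ≤ m, φ i ≤ ga i := hga3 φ hφmin hφconv
  have hA : ∀ i l, i ≤ m → l ≤ k → gc (i + l) ≤ ga i + b l := by
    intro i l him hlk
    have h1 : gc (i + l) - b l ≤ φ i :=
      Finset.le_sup' (fun l => gc (i + l) - b l) (Finset.mem_range.mpr (by omega))
    have h2 := hφga i him
    linarith
  -- Phase B: ψ l := sup_x (gc (l + x) - ga x) is a convex minorant of b
  set ψ : ℕ → ℝ := fun l =>
    (Finset.range (m + 1)).sup' Finset.nonempty_range_add_one (fun x => gc (l + x) - ga x)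
    with hψ
  have hψmin : ∀ l ≤ k, ψ l ≤ b l := by
    intro l hl
    apply Finset.sup'_le
    intro x hx
    rw [Finset.mem_range] at hx
    have := hA x l (by omega) hl
    rw [show l + x = x + l by omega]
    linarith
  have hψconv : ∀ l, l + 2 ≤ k → ψ (l + 1) - ψ l ≤ ψ (l + 2) - ψ (l + 1) := by
    intro l hl
    exact sup'_shift_convex k m gc ga (by
      intro i hi
      exact hgc2 i (by omega)) l hl
  have hψgb : ∀ l ≤ k, ψ l ≤ gb l := hgb3 ψ hψmin hψconv
  have hB : ∀ i l, i ≤ m → l ≤ k → gc (i + l) ≤ ga i + gb l := by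
    intro i l him hlk
    have h1 : gc (l + i) - ga i ≤ ψ l :=
      Finset.le_sup' (fun x => gc (l + x) - ga x) (Finset.mem_range.mpr (by omega))
    have h2 := hψgb l hlk
    rw [show l + i = i + l by omega] at h1
    linarith
  -- conclude
  intro j hj
  apply le_antisymm _ (hCgc j hj)
  rw [tropConv_eq m k ga gb j hj]
  apply Finset.le_inf'
  intro i hi
  rw [Finset.mem_Icc] at hi
  have := hB i (j - i) (by omega) (by omega)
  rwa [show i + (j - i) = j by omega] at this
end

section
/- Let n ≥ 2 and let p be a tropical polynomial of degree n with coefficients a₀,…,aₙ ∈ ℝ ∪ {∞} such that a₀ and aₙ are finite and for every i with 0 < i < n the point (i, a_i) lies strictly above the line segment joining (0, a₀) and (n, aₙ), i.e. a_i > a₀ + (i/n)(aₙ − a₀) (where a_i = ∞ counts as strictly above). Then p is irreducible except for monomial factors: whenever p = f ⊗ g is a product of two tropical polynomials, at least one of f, g has exactly one finite coefficient (i.e. is a tropical monomial). -/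
/-- Min-plus (tropical) convolution of coefficient sequences with values in
`ℝ ∪ {∞}` (missing coefficients are `∞ = ⊤`). -/
noncomputable def tconv (a b : ℕ → WithTop ℝ) (j : ℕ) : WithTop ℝ :=
  (Finset.range (j + 1)).inf fun i => a i + b (j - i)

/-!
If `p = f ⊗ g` with `deg f = d` and `deg g = e` both positive, then `d + e = n` and
`a_d + a_e ≤ (f_d + g_0) + (f_0 + g_e) = a_0 + a_n`. But the strict-concavity hypothesis
makes `a_d + a_e` exceed the sum of the heights of the segment over `d` and `e`, which is
again `a_0 + a_n` because `d + e = n`.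
-/

def HasTropDegree (f : ℕ → WithTop ℝ) (d : ℕ) : Prop :=
  f d ≠ ⊤ ∧ ∀ i, d < i → f i = ⊤

namespace HasTropDegree

variable {f g : ℕ → WithTop ℝ} {d e : ℕ}

theorem unique (hd : HasTropDegree f d) (he : HasTropDegree f e) : d = e := by
  by_contra hne
  rcases Nat.lt_or_gt_of_ne hne with h | h
  · exact he.1 (hd.2 e h)
  · exact hd.1 (he.2 d h)

theorem existsUnique_ne_top_of_zero (hf : HasTropDegree f 0) : ∃! i, f i ≠ ⊤ :=
  ⟨0, hf.1, fun i hi => by_contra fun h0 => hi (hf.2 i (Nat.pos_of_ne_zero h0))⟩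

end HasTropDegree

section tconv

variable {f g : ℕ → WithTop ℝ} {d e : ℕ}

theorem tconv_le {i j : ℕ} (h : i ≤ j) : tconv f g j ≤ f i + g (j - i) :=
  Finset.inf_le (f := fun i => f i + g (j - i)) (Finset.mem_range.2 (Nat.lt_succ_of_le h))

theorem tconv_zero : tconv f g 0 = f 0 + g 0 := by
  simp [tconv]

theorem tconv_eq_top (hf : HasTropDegree f d) (hg : HasTropDegree g e) {j : ℕ} (hj : d + e < j) :
    tconv f g j = ⊤ := by
  refine (Finset.inf_eq_top_iff _ _).2 fun i hi => ?_
  rcases lt_or_ge d i with h | h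
  · rw [hf.2 i h, top_add]
  · rw [hg.2 (j - i) (by omega), add_top]

theorem tconv_add_degree (hf : HasTropDegree f d) (hg : HasTropDegree g e) :
    tconv f g (d + e) = f d + g e := by
  refine le_antisymm (by simpa using tconv_le (f := f) (g := g) (Nat.le_add_right d e)) ?_
  refine Finset.le_inf fun i hi => ?_
  rcases lt_trichotomy i d with h | rfl | h
  · rw [hg.2 (d + e - i) (by omega), add_top]
    exact le_top
  · simp
  · rw [hf.2 i h, top_add]
    exact le_top

theorem HasTropDegree.tconv (hf : HasTropDegree f d) (hg : HasTropDegree g e) :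
    HasTropDegree (tconv f g) (d + e) :=
  ⟨by rw [tconv_add_degree hf hg]; exact WithTop.add_ne_top.2 ⟨hf.1, hg.1⟩,
    fun _ hj => tconv_eq_top hf hg hj⟩

theorem tconv_degree_add_tconv_degree_le (hf : HasTropDegree f d) (hg : HasTropDegree g e) :
    tconv f g d + tconv f g e ≤ tconv f g 0 + tconv f g (d + e) := by
  calc tconv f g d + tconv f g e ≤ (f d + g 0) + (f 0 + g e) := by
        gcongr
        · simpa using tconv_le (f := f) (g := g) (le_refl d)
        · simpa using tconv_le (f := f) (g := g) (Nat.zero_le e)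
    _ = tconv f g 0 + tconv f g (d + e) := by
        rw [tconv_zero, tconv_add_degree hf hg]
        abel

end tconv

theorem strictly_concave_irreducible_general (n : ℕ)
    (a : ℕ → WithTop ℝ) (A0 An : ℝ)
    (h0 : a 0 = (A0 : WithTop ℝ)) (hnn : a n = (An : WithTop ℝ))
    (hdeg : ∀ i, n < i → a i = ⊤)
    (habove : ∀ i, 0 < i → i < n →
      ((A0 + (i / n : ℝ) * (An - A0) : ℝ) : WithTop ℝ) < a i)
    (f g : ℕ → WithTop ℝ) (df dg : ℕ)
    (hf : f df ≠ ⊤) (hf' : ∀ i, df < i → f i = ⊤)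
    (hg : g dg ≠ ⊤) (hg' : ∀ i, dg < i → g i = ⊤)
    (hprod : ∀ j, a j = tconv f g j) :
    (∃! i, f i ≠ ⊤) ∨ (∃! i, g i ≠ ⊤) := by
  have hfd : HasTropDegree f df := ⟨hf, hf'⟩
  have hgd : HasTropDegree g dg := ⟨hg, hg'⟩
  have hfg : tconv f g = a := funext fun j => (hprod j).symm
  have hsum : df + dg = n :=
    (hfd.tconv hgd).unique (hfg ▸ ⟨by simp [hnn], hdeg⟩)
  rcases Nat.eq_zero_or_pos df with rfl | hdf
  · exact Or.inl hfd.existsUnique_ne_top_of_zero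
  rcases Nat.eq_zero_or_pos dg with rfl | hdg
  · exact Or.inr hgd.existsUnique_ne_top_of_zero
  have hle := tconv_degree_add_tconv_degree_le hfd hgd
  rw [hfg, hsum, h0, hnn] at hle
  have hlt := WithTop.add_lt_add (habove df hdf (by omega)) (habove dg hdg (by omega))
  have hline : A0 + (df / n : ℝ) * (An - A0) + (A0 + (dg / n : ℝ) * (An - A0)) = A0 + An := by
    have hn : (n : ℝ) ≠ 0 := by exact_mod_cast (show n ≠ 0 by omega)
    rw [← hsum, Nat.cast_add] at hn ⊢
    field_simp
    ring
  rw [← WithTop.coe_add, hline, WithTop.coe_add] at hlt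
  exact absurd (hlt.trans_le hle) (lt_irrefl _)

/-- A tropical polynomial of degree `n` whose diagram lies strictly above the line
segment joining its lowest- and highest-degree terms (except at those two points)
is irreducible apart from monomial factors. -/
theorem strictly_concave_irreducible (n : ℕ) (hn : 2 ≤ n)
    (a : ℕ → WithTop ℝ) (A0 An : ℝ)
    (h0 : a 0 = (A0 : WithTop ℝ)) (hnn : a n = (An : WithTop ℝ))
    (hdeg : ∀ i, n < i → a i = ⊤)
    (habove : ∀ i, 0 < i → i < n →
      ((A0 + (i / n : ℝ) * (An - A0) : ℝ) : WithTop ℝ) < a i)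
    (f g : ℕ → WithTop ℝ) (df dg : ℕ)
    (hf : f df ≠ ⊤) (hf' : ∀ i, df < i → f i = ⊤)
    (hg : g dg ≠ ⊤) (hg' : ∀ i, dg < i → g i = ⊤)
    (hprod : ∀ j, a j = tconv f g j) :
    (∃! i, f i ≠ ⊤) ∨ (∃! i, g i ≠ ⊤) :=
  strictly_concave_irreducible_general n a A0 An h0 hnn hdeg habove f g df dg hf hf' hg hg' hprod
end

section
/- Let p be a tropical polynomial of degree n ≥ 1 with all coefficients a₀,…,aₙ ∈ ℝ finite, whose diagram is convex, i.e. the successive differences a_{i+1} − a_i are nondecreasing in i. Then p factors into linear tropical factors: there exist λ ∈ ℝ and r₁,…,rₙ ∈ ℝ such that, as formal tropical polynomials, p = λ ⊗ (r₁ ⊕ x) ⊗ (r₂ ⊕ x) ⊗ ⋯ ⊗ (rₙ ⊕ x). -/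
/-- The linear tropical polynomial `r ⊕ x`, with coefficient sequence `(r, 0)`. -/
noncomputable def linFactor (r : ℝ) : ℕ → WithTop ℝ := fun i =>
  if i = 0 then (r : WithTop ℝ) else if i = 1 then ((0 : ℝ) : WithTop ℝ) else ⊤

/-- The constant (degree-zero) tropical polynomial `λ`. -/
noncomputable def tmonomial (lam : ℝ) : ℕ → WithTop ℝ := fun i =>
  if i = 0 then (lam : WithTop ℝ) else ⊤

noncomputable def coeffsUpTo (n : ℕ) (a : ℕ → ℝ) (j : ℕ) : WithTop ℝ :=
  if j ≤ n then (a j : WithTop ℝ) else ⊤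

lemma tmonomial_eq_coeffsUpTo_zero (a : ℕ → ℝ) : tmonomial (a 0) = coeffsUpTo 0 a := by
  funext j
  cases j <;> simp [tmonomial, coeffsUpTo]

lemma tconv_linFactor_zero (r : ℝ) (q : ℕ → WithTop ℝ) :
    tconv (linFactor r) q 0 = r + q 0 := by
  simp [tconv, linFactor]

lemma tconv_linFactor_succ (r : ℝ) (q : ℕ → WithTop ℝ) (j : ℕ) :
    tconv (linFactor r) q (j + 1) = min (r + q (j + 1)) (q j) := by
  unfold tconv
  refine le_antisymm (le_min ?_ ?_) (Finset.le_inf fun i _ => ?_)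
  · simpa [linFactor] using
      Finset.inf_le (f := fun i => linFactor r i + q (j + 1 - i)) (by simp : 0 ∈ _)
  · simpa [linFactor] using
      Finset.inf_le (f := fun i => linFactor r i + q (j + 1 - i)) (by simp : 1 ∈ _)
  · rcases i with _ | _ | _ <;> simp [linFactor]

lemma first_slope_le_of_convex {n : ℕ} {a : ℕ → ℝ}
    (hconv : ∀ i, i + 2 ≤ n → a (i + 1) - a i ≤ a (i + 2) - a (i + 1)) :
    ∀ k, k < n → a 1 - a 0 ≤ a (k + 1) - a k
  | 0, _ => le_rfl
  | k + 1, hk => (first_slope_le_of_convex hconv k (by omega)).trans (hconv k (by omega))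

lemma tconv_linFactor_coeffsUpTo {n : ℕ} {a : ℕ → ℝ}
    (hslope : ∀ k, k < n + 1 → a 1 - a 0 ≤ a (k + 1) - a k) :
    tconv (linFactor (a 0 - a 1)) (coeffsUpTo n fun i => a (i + 1)) = coeffsUpTo (n + 1) a := by
  funext j
  cases j with
  | zero =>
    rw [tconv_linFactor_zero]
    simp only [coeffsUpTo, zero_le, if_true]
    exact_mod_cast sub_add_cancel (a 0) (a 1)
  | succ k =>
    rw [tconv_linFactor_succ]
    rcases lt_trichotomy k n with hk | rfl | hk
    · have hmin : a (k + 1) ≤ a 0 - a 1 + a (k + 2) := by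
        linarith [hslope (k + 1) (by omega)]
      simp only [coeffsUpTo, if_pos (show k + 1 ≤ n by omega), if_pos hk.le,
        if_pos (show k + 1 ≤ n + 1 by omega)]
      exact min_eq_right (mod_cast hmin)
    · simp [coeffsUpTo]
    · simp [coeffsUpTo, show ¬ k ≤ n by omega, show ¬ k + 1 ≤ n by omega]

lemma foldr_linFactor_eq_coeffsUpTo (n : ℕ) (a : ℕ → ℝ)
    (hconv : ∀ i, i + 2 ≤ n → a (i + 1) - a i ≤ a (i + 2) - a (i + 1)) :
    (List.ofFn fun i : Fin n => linFactor (a i - a (i + 1))).foldr tconv (tmonomial (a n))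
      = coeffsUpTo n a := by
  induction n generalizing a with
  | zero => exact tmonomial_eq_coeffsUpTo_zero a
  | succ n ih =>
    have hquot := ih (fun i => a (i + 1)) fun i hi => hconv (i + 1) (by omega)
    simp only [List.ofFn_succ, List.foldr_cons, Fin.val_succ, Fin.val_zero] at hquot ⊢
    rw [hquot]
    exact tconv_linFactor_coeffsUpTo (first_slope_le_of_convex hconv)

theorem convex_factors_into_linear_general (n : ℕ) (a : ℕ → ℝ)
    (hconvex : ∀ i, i + 2 ≤ n → a (i + 1) - a i ≤ a (i + 2) - a (i + 1)) :
    ∃ (lam : ℝ) (r : Fin n → ℝ), ∀ j : ℕ,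
      (List.ofFn fun i : Fin n => linFactor (r i)).foldr tconv (tmonomial lam) j
        = if j ≤ n then ((a j : ℝ) : WithTop ℝ) else ⊤ :=
  ⟨a n, fun i => a i - a (i + 1), congrFun (foldr_linFactor_eq_coeffsUpTo n a hconvex)⟩

/-- A tropical polynomial with finite coefficients whose diagram is convex factors
into linear tropical factors `λ ⊗ (r₁ ⊕ x) ⊗ ⋯ ⊗ (rₙ ⊕ x)`. -/
theorem convex_factors_into_linear (n : ℕ) (hn : 1 ≤ n) (a : ℕ → ℝ)
    (hconvex : ∀ i, i + 2 ≤ n → a (i + 1) - a i ≤ a (i + 2) - a (i + 1)) :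
    ∃ (lam : ℝ) (r : Fin n → ℝ), ∀ j : ℕ,
      (List.ofFn fun i : Fin n => linFactor (r i)).foldr tconv (tmonomial lam) j
        = if j ≤ n then ((a j : ℝ) : WithTop ℝ) else ⊤ :=
  convex_factors_into_linear_general n a hconvex
end

section
/- Fix an integer n ≥ 2 and consider tropical polynomials of degree 2n with coefficient sequence c₀,…,c_{2n} satisfying c₀ = cₙ = c_{2n} = 0 and c_i > 0 for all i ∉ {0, n, 2n} (the equal slope and degree concave case). The set of coefficient vectors (c_i)_{i ∈ {1,…,2n−1} \ {n}} ∈ (0,∞)^{2n−2} for which the corresponding tropical polynomial factors as a product of two tropical polynomials of degree n — i.e. for which there exist a, b : {0,…,n} → ℝ whose min-plus convolution equals (c₀,…,c_{2n}) — has Lebesgue measure zero in ℝ^{2n−2}. -/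
/-- The coefficient sequence `c₀, …, c_{2n}` of an "equal slope and degree concave"
tropical polynomial determined by the vector `v` of its free coefficients:
`c 0 = c n = c (2n) = 0`, and the coefficients in the remaining `2n - 2` degrees
`{1,…,2n-1} \ {n}` are the entries of `v` (degree `i < n` corresponds to index
`i - 1`, degree `i > n` to index `i - 2`). -/
def coeffOf (n : ℕ) (v : Fin (2 * n - 2) → ℝ) : ℕ → ℝ := fun i =>
  if i = 0 ∨ i = n ∨ i = 2 * n then 0
  else if h : i - 1 < 2 * n - 2 ∧ i < n then v ⟨i - 1, h.1⟩
  else if h : i - 2 < 2 * n - 2 then v ⟨i - 2, h⟩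
  else 0

open MeasureTheory

namespace tropConv

variable {m k : ℕ} {a b : ℕ → ℝ}

lemma finite_terms (m k : ℕ) (a b : ℕ → ℝ) (j : ℕ) :
    {x : ℝ | ∃ i : ℕ, i ≤ m ∧ i ≤ j ∧ j - i ≤ k ∧ x = a i + b (j - i)}.Finite :=
  ((Set.finite_Iic m).image fun i => a i + b (j - i)).subset
    (by rintro x ⟨i, hi, -, -, rfl⟩; exact ⟨i, hi, rfl⟩)

lemma le_add (a b : ℕ → ℝ) {i l : ℕ} (him : i ≤ m) (hlk : l ≤ k) :
    tropConv m k a b (i + l) ≤ a i + b l :=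
  csInf_le (finite_terms m k a b _).bddBelow
    ⟨i, him, Nat.le_add_right i l, by omega, by rw [Nat.add_sub_cancel_left]⟩

lemma le_of_forall_le {j : ℕ} (hj : j ≤ m + k) {x : ℝ}
    (h : ∀ i ≤ m, ∀ l ≤ k, i + l = j → x ≤ a i + b l) : x ≤ tropConv m k a b j := by
  refine le_csInf ⟨a (min m j) + b (j - min m j), min m j, min_le_left _ _, min_le_right _ _,
    by omega, rfl⟩ ?_
  rintro y ⟨i, him, hij, hjk, rfl⟩
  exact h i him (j - i) hjk (by omega)

lemma zero_eq : tropConv m k a b 0 = a 0 + b 0 :=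
  le_antisymm (le_add a b (Nat.zero_le m) (Nat.zero_le k))
    (le_of_forall_le (Nat.zero_le _) fun i _ l _ h => by
      rw [Nat.add_eq_zero_iff.1 h |>.1, Nat.add_eq_zero_iff.1 h |>.2])

lemma add_eq : tropConv m k a b (m + k) = a m + b k :=
  le_antisymm (le_add a b le_rfl le_rfl)
    (le_of_forall_le le_rfl fun i hi l hl h => by
      obtain ⟨rfl, rfl⟩ : i = m ∧ l = k := by omega
      rfl)

end tropConv

noncomputable def boundaryMin (a b : ℕ → ℝ) (i : ℕ) : ℝ := min (a i + b 0) (a 0 + b i)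

lemma boundaryMin_le_left (a b : ℕ → ℝ) (i : ℕ) : boundaryMin a b i ≤ a i + b 0 :=
  min_le_left _ _

lemma boundaryMin_le_right (a b : ℕ → ℝ) (i : ℕ) : boundaryMin a b i ≤ a 0 + b i :=
  min_le_right _ _

section Square

variable {n : ℕ} {a b : ℕ → ℝ}

lemma tropConv_le_boundaryMin {i : ℕ} (hi : i ≤ n) :
    tropConv n n a b i ≤ boundaryMin a b i :=
  le_min (tropConv.le_add a b hi (Nat.zero_le n))
    (by simpa using tropConv.le_add a b (Nat.zero_le n) hi)

lemma tropConv_add_le_boundaryMin (ha : a n = a 0) (hb : b n = b 0) {i : ℕ} (hi : i ≤ n) :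
    tropConv n n a b (n + i) ≤ boundaryMin a b i :=
  le_min (by simpa [add_comm, hb] using tropConv.le_add a b hi (le_refl n))
    (by simpa [ha] using tropConv.le_add a b (le_refl n) hi)

lemma le_add_of_le_boundaryMin (h00 : a 0 + b 0 = 0) {x : ℝ} (hx : 0 ≤ x) {k l : ℕ}
    (hk : x ≤ boundaryMin a b k) (hl : x ≤ boundaryMin a b l) : x ≤ a k + b l := by
  have hak := hk.trans (boundaryMin_le_left a b k)
  have hbl := hl.trans (boundaryMin_le_right a b l)
  linarith

structure IsPosBoundaryMinimizer (n : ℕ) (a b : ℕ → ℝ) (i : ℕ) : Prop where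
  one_le : 1 ≤ i
  lt : i < n
  pos : 0 < boundaryMin a b i
  le : ∀ k, 1 ≤ k → k < n → boundaryMin a b i ≤ boundaryMin a b k

lemma boundaryMin_le_tropConv (h00 : a 0 + b 0 = 0) {i : ℕ}
    (hi : IsPosBoundaryMinimizer n a b i) : boundaryMin a b i ≤ tropConv n n a b i := by
  obtain ⟨hi1, hin, hpos, hle⟩ := hi
  refine tropConv.le_of_forall_le (by omega) fun k _ l _ hkl => ?_
  subst hkl
  rcases Nat.eq_zero_or_pos k with rfl | hk
  · simpa using boundaryMin_le_right a b l
  rcases Nat.eq_zero_or_pos l with rfl | hl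
  · simpa using boundaryMin_le_left a b k
  exact le_add_of_le_boundaryMin h00 hpos.le (hle k hk (by omega)) (hle l hl (by omega))

lemma boundaryMin_le_tropConv_add (h00 : a 0 + b 0 = 0) (ha : a n = a 0) (hb : b n = b 0)
    {i : ℕ} (hi : IsPosBoundaryMinimizer n a b i) :
    boundaryMin a b i ≤ tropConv n n a b (n + i) := by
  obtain ⟨hi1, hin, hpos, hle⟩ := hi
  refine tropConv.le_of_forall_le (by omega) fun k hkn l hln hkl => ?_
  rcases hln.eq_or_lt with rfl | hln
  · obtain rfl : k = i := by omega
    simpa [hb] using boundaryMin_le_left a b k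
  rcases hkn.eq_or_lt with rfl | hkn
  · obtain rfl : l = i := by omega
    simpa [ha] using boundaryMin_le_right a b l
  exact le_add_of_le_boundaryMin h00 hpos.le (hle k (by omega) hkn) (hle l (by omega) hln)

theorem exists_tropConv_add_eq (hn : 2 ≤ n) (h0 : tropConv n n a b 0 = 0)
    (hmid : tropConv n n a b n = 0) (h2n : tropConv n n a b (2 * n) = 0)
    (hpos : ∀ i, 1 ≤ i → i < n → 0 < tropConv n n a b i) :
    ∃ i, 1 ≤ i ∧ i < n ∧ tropConv n n a b (n + i) = tropConv n n a b i := by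
  have h00 : a 0 + b 0 = 0 := tropConv.zero_eq.symm.trans h0
  have hnn : a n + b n = 0 := by rw [← h2n, two_mul, tropConv.add_eq]
  have han0 : 0 ≤ a n + b 0 := by
    simpa [hmid] using tropConv.le_add a b (le_refl n) (Nat.zero_le n)
  have ha0n : 0 ≤ a 0 + b n := by
    simpa [hmid] using tropConv.le_add a b (Nat.zero_le n) (le_refl n)
  have ha : a n = a 0 := by linarith
  have hb : b n = b 0 := by linarith
  obtain ⟨i, hi, hle⟩ := (Finset.Ico 1 n).exists_min_image (boundaryMin a b)
    ⟨1, Finset.mem_Ico.2 ⟨le_rfl, by omega⟩⟩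
  obtain ⟨hi1, hin⟩ := Finset.mem_Ico.1 hi
  have hmin : IsPosBoundaryMinimizer n a b i :=
    ⟨hi1, hin, (hpos i hi1 hin).trans_le (tropConv_le_boundaryMin hin.le),
      fun k hk1 hkn => hle k (Finset.mem_Ico.2 ⟨hk1, hkn⟩)⟩
  refine ⟨i, hi1, hin, le_antisymm ?_ ?_⟩
  · exact (tropConv_add_le_boundaryMin ha hb hin.le).trans (boundaryMin_le_tropConv h00 hmin)
  · exact (tropConv_le_boundaryMin hin.le).trans (boundaryMin_le_tropConv_add h00 ha hb hmin)

end Square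

section coeffOf

variable {n : ℕ} (v : Fin (2 * n - 2) → ℝ)

lemma coeffOf_zero : coeffOf n v 0 = 0 := by simp [coeffOf]

lemma coeffOf_self : coeffOf n v n = 0 := by simp [coeffOf]

lemma coeffOf_two_mul : coeffOf n v (2 * n) = 0 := by simp [coeffOf]

lemma coeffOf_of_lt {i : ℕ} (h1 : 1 ≤ i) (h2 : i < n) :
    coeffOf n v i = v ⟨i - 1, by omega⟩ := by
  rw [coeffOf, if_neg (by omega), dif_pos ⟨by omega, h2⟩]

lemma coeffOf_of_gt {i : ℕ} (h1 : n < i) (h2 : i < 2 * n) :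
    coeffOf n v i = v ⟨i - 2, by omega⟩ := by
  rw [coeffOf, if_neg (by omega), dif_neg (by omega), dif_pos (by omega)]

end coeffOf

theorem volume_setOf_not_injective {ι : Type*} [Fintype ι] :
    volume {v : ι → ℝ | ¬ Function.Injective v} = 0 := by
  classical
  have hsub : {v : ι → ℝ | ¬ Function.Injective v} ⊆
      ⋃ p : ι × ι, ⋃ (_ : p.1 ≠ p.2),
        (LinearMap.ker (LinearMap.proj (R := ℝ) (φ := fun _ : ι => ℝ) p.1 - LinearMap.proj p.2) :
          Set (ι → ℝ)) := by
    intro v hv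
    simp only [Function.Injective, not_forall] at hv
    obtain ⟨p, q, hpq, hne⟩ := hv
    simp only [Set.mem_iUnion]
    exact ⟨(p, q), hne, by simp [hpq]⟩
  refine measure_mono_null hsub (measure_iUnion_null fun p => measure_iUnion_null fun hp => ?_)
  refine Measure.addHaar_submodule _ _ fun htop => ?_
  have := (LinearMap.ker _).eq_top_iff'.1 htop (Pi.single p.1 1)
  simp [hp] at this

/-- In the equal slope and degree concave case, the set of coefficient vectors in
`(0,∞)^{2n-2}` whose tropical polynomial factors as a product of two tropical
polynomials of degree `n` has Lebesgue measure zero. -/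
theorem factorable_measure_zero (n : ℕ) (hn : 2 ≤ n) :
    MeasureTheory.volume
      {v : Fin (2 * n - 2) → ℝ | (∀ i, 0 < v i) ∧
        ∃ a b : ℕ → ℝ, ∀ j ≤ 2 * n, tropConv n n a b j = coeffOf n v j} = 0 := by
  refine measure_mono_null ?_ volume_setOf_not_injective
  rintro v ⟨hv, a, b, hab⟩ (hinj : Function.Injective v)
  obtain ⟨i, hi1, hin, hi⟩ := exists_tropConv_add_eq hn
    (by rw [hab 0 (by omega), coeffOf_zero]) (by rw [hab n (by omega), coeffOf_self])
    (by rw [hab _ le_rfl, coeffOf_two_mul])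
    (fun i hi1 hin => by rw [hab i (by omega), coeffOf_of_lt v hi1 hin]; exact hv _)
  rw [hab _ (by omega), hab _ (by omega), coeffOf_of_gt v (by omega) (by omega),
    coeffOf_of_lt v hi1 hin] at hi
  have hidx := Fin.mk.inj_iff.1 (hinj hi)
  omega
end

section
/- Let n ≥ 2 and let c₀,…,c_{2n} be real numbers with c₀ = cₙ = c_{2n} = 0 and c_i ∈ {1,2,3} for every i ∉ {0, n, 2n}. Suppose there exist a, b : {0,…,n} → ℝ whose min-plus convolution equals c. Then there exist such a, b which in addition satisfy a₀ = aₙ = b₀ = bₙ = 0 and, for every i with 0 < i < n: (i) if c_i = 1 then (a_i, b_i) ∈ {(1,1), (1,3), (3,1)} and c_{i+n} = 1, and conversely if c_{i+n} = 1 then c_i = 1 and (a_i, b_i) ∈ {(1,1), (1,3), (3,1)}; (ii) if c_i = c_{i+n} = 2 then (a_i, b_i) = (2,2); (iii) if c_i = 3 or c_{i+n} = 3 then (a_i, b_i) = (3,3). -/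
section TropConv

variable {m k i l j : ℕ} {a b : ℕ → ℝ}

theorem tropConv_set_finite (m k : ℕ) (a b : ℕ → ℝ) (j : ℕ) :
    {x : ℝ | ∃ i : ℕ, i ≤ m ∧ i ≤ j ∧ j - i ≤ k ∧ x = a i + b (j - i)}.Finite :=
  ((Set.finite_Iic j).image fun i => a i + b (j - i)).subset <| by
    rintro x ⟨i, -, hij, -, rfl⟩
    exact ⟨i, hij, rfl⟩

theorem tropConv_le_add (hi : i ≤ m) (hl : l ≤ k) (hj : i + l = j) :
    tropConv m k a b j ≤ a i + b l :=
  csInf_le (tropConv_set_finite m k a b j).bddBelow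
    ⟨i, hi, by omega, by omega, by rw [show j - i = l by omega]⟩

theorem le_tropConv {r : ℝ} (hj : j ≤ m + k)
    (h : ∀ i l, i ≤ m → l ≤ k → i + l = j → r ≤ a i + b l) :
    r ≤ tropConv m k a b j :=
  le_csInf ⟨_, min j m, by omega, by omega, by omega, rfl⟩ <| by
    rintro x ⟨i, hi, hij, hjk, rfl⟩
    exact h i (j - i) hi hjk (by omega)

theorem exists_tropConv_eq (a b : ℕ → ℝ) (hj : j ≤ m + k) :
    ∃ i l, i ≤ m ∧ l ≤ k ∧ i + l = j ∧ tropConv m k a b j = a i + b l := by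
  obtain ⟨i, hi, hij, hjk, he⟩ := Set.Nonempty.csInf_mem
    (s := {x : ℝ | ∃ i : ℕ, i ≤ m ∧ i ≤ j ∧ j - i ≤ k ∧ x = a i + b (j - i)})
    ⟨_, min j m, by omega, by omega, by omega, rfl⟩ (tropConv_set_finite m k a b j)
  exact ⟨i, j - i, hi, hjk, by omega, he⟩

theorem tropConv_sub_add (m k : ℕ) (a b : ℕ → ℝ) (t : ℝ) (j : ℕ) :
    tropConv m k (fun i => a i - t) (fun i => b i + t) j = tropConv m k a b j := by
  simp only [tropConv, sub_add_add_cancel]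

theorem tropConv_le_left_of_eq_zero {n : ℕ} (hb0 : b 0 = 0) (hbn : b n = 0) (hi : i ≤ n)
    (hj : j = i ∨ j = i + n) : tropConv n n a b j ≤ a i := by
  rcases hj with rfl | rfl
  · simpa [hb0] using tropConv_le_add (a := a) (b := b) hi (Nat.zero_le n) (add_zero j)
  · simpa [hbn] using tropConv_le_add (a := a) (b := b) (l := n) hi le_rfl rfl

theorem tropConv_le_right_of_eq_zero {n : ℕ} (ha0 : a 0 = 0) (han : a n = 0) (hi : i ≤ n)
    (hj : j = i ∨ j = i + n) : tropConv n n a b j ≤ b i := by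
  rcases hj with rfl | rfl
  · simpa [ha0] using tropConv_le_add (a := a) (b := b) (Nat.zero_le n) hi (zero_add j)
  · simpa [han] using tropConv_le_add (a := a) (b := b) le_rfl hi (add_comm n i)

end TropConv

structure IsOneTwoThreeCoeffs (n : ℕ) (c : ℕ → ℝ) : Prop where
  zero : c 0 = 0
  mid : c n = 0
  last : c (2 * n) = 0
  mem : ∀ i ≤ 2 * n, i ≠ 0 → i ≠ n → i ≠ 2 * n → c i = 1 ∨ c i = 2 ∨ c i = 3

theorem exists_interior_of_ne {n j : ℕ} (hj : j ≤ 2 * n) (h0 : j ≠ 0) (hn : j ≠ n)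
    (h2n : j ≠ 2 * n) : ∃ i, 0 < i ∧ i < n ∧ (j = i ∨ j = i + n) := by
  rcases lt_or_gt_of_ne hn with hjn | hjn
  · exact ⟨j, by omega, hjn, Or.inl rfl⟩
  · exact ⟨j - n, by omega, by omega, Or.inr (by omega)⟩

namespace IsOneTwoThreeCoeffs

variable {n i j : ℕ} {c : ℕ → ℝ}

theorem mem_of_interior (hc : IsOneTwoThreeCoeffs n c) (hi0 : 0 < i) (hin : i < n)
    (hj : j = i ∨ j = i + n) : c j = 1 ∨ c j = 2 ∨ c j = 3 :=
  hc.mem j (by omega) (by omega) (by omega) (by omega)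

theorem one_le (hc : IsOneTwoThreeCoeffs n c) (hi0 : 0 < i) (hin : i < n)
    (hj : j = i ∨ j = i + n) : 1 ≤ c j := by
  rcases hc.mem_of_interior hi0 hin hj with h | h | h <;> linarith

theorem le_three (hc : IsOneTwoThreeCoeffs n c) (hj : j ≤ 2 * n) : c j ≤ 3 := by
  by_cases h0 : j = 0
  · simp [h0, hc.zero]
  by_cases hn : j = n
  · simp [hn, hc.mid]
  by_cases h2n : j = 2 * n
  · simp [h2n, hc.last]
  rcases hc.mem j hj h0 hn h2n with h | h | h <;> linarith

end IsOneTwoThreeCoeffs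

structure IsNormalizedFactorization (n : ℕ) (a b c : ℕ → ℝ) : Prop where
  conv_eq : ∀ j ≤ 2 * n, tropConv n n a b j = c j
  left_zero : a 0 = 0
  left_last : a n = 0
  right_zero : b 0 = 0
  right_last : b n = 0

theorem exists_isNormalizedFactorization {n : ℕ} {a b c : ℕ → ℝ} (h0 : c 0 = 0)
    (hn : c n = 0) (h2n : c (2 * n) = 0) (hab : ∀ j ≤ 2 * n, tropConv n n a b j = c j) :
    ∃ a' b', IsNormalizedFactorization n a' b' c := by
  have h00 : a 0 + b 0 = 0 := by
    obtain ⟨i, l, -, -, hil, he⟩ := exists_tropConv_eq a b (show 0 ≤ n + n by omega)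
    obtain ⟨rfl, rfl⟩ : i = 0 ∧ l = 0 := by omega
    rw [← he, hab 0 (by omega), h0]
  have hnn : a n + b n = 0 := by
    obtain ⟨i, l, hi, hl, hil, he⟩ := exists_tropConv_eq a b (show 2 * n ≤ n + n by omega)
    obtain ⟨rfl, rfl⟩ : i = n ∧ l = n := by omega
    rw [← he, hab _ le_rfl, h2n]
  have hn0 : 0 ≤ a n + b 0 :=
    hn ▸ hab n (by omega) ▸ tropConv_le_add le_rfl (Nat.zero_le n) (add_zero n)
  have h0n : 0 ≤ a 0 + b n :=
    hn ▸ hab n (by omega) ▸ tropConv_le_add (Nat.zero_le n) le_rfl (zero_add n)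
  refine ⟨fun i => a i - a 0, fun i => b i + a 0,
    ⟨fun j hj => (tropConv_sub_add n n a b _ j).trans (hab j hj), sub_self _, ?_, ?_, ?_⟩⟩ <;>
  linarith

namespace IsNormalizedFactorization

variable {n i j k l : ℕ} {a b c : ℕ → ℝ}

theorem le_add (h : IsNormalizedFactorization n a b c) (hk : k ≤ n) (hl : l ≤ n)
    (hj : k + l = j) : c j ≤ a k + b l :=
  h.conv_eq j (by omega) ▸ tropConv_le_add hk hl hj

theorem le_left (h : IsNormalizedFactorization n a b c) (hi : i ≤ n)
    (hj : j = i ∨ j = i + n) : c j ≤ a i :=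
  h.conv_eq j (by omega) ▸ tropConv_le_left_of_eq_zero h.right_zero h.right_last hi hj

theorem le_right (h : IsNormalizedFactorization n a b c) (hi : i ≤ n)
    (hj : j = i ∨ j = i + n) : c j ≤ b i :=
  h.conv_eq j (by omega) ▸ tropConv_le_right_of_eq_zero h.left_zero h.left_last hi hj

theorem one_le_left (hc : IsOneTwoThreeCoeffs n c) (h : IsNormalizedFactorization n a b c)
    (hk0 : 0 < k) (hkn : k < n) : 1 ≤ a k :=
  (hc.one_le hk0 hkn (Or.inl rfl)).trans (h.le_left hkn.le (Or.inl rfl))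

theorem one_le_right (hc : IsOneTwoThreeCoeffs n c) (h : IsNormalizedFactorization n a b c)
    (hk0 : 0 < k) (hkn : k < n) : 1 ≤ b k :=
  (hc.one_le hk0 hkn (Or.inl rfl)).trans (h.le_right hkn.le (Or.inl rfl))

theorem eq_left_or_eq_right_or_exists_interior (h : IsNormalizedFactorization n a b c)
    (hi0 : 0 < i) (hin : i < n) (hj : j = i ∨ j = i + n) :
    c j = a i ∨ c j = b i ∨
      ∃ k l, 0 < k ∧ k < n ∧ 0 < l ∧ l < n ∧ k + l = j ∧ c j = a k + b l := by
  obtain ⟨k, l, hk, hl, hkl, he⟩ := exists_tropConv_eq a b (show j ≤ n + n by omega)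
  rw [h.conv_eq j (by omega)] at he
  have : (k = 0 ∨ k = n) ∧ l = i ∨ k = i ∧ (l = 0 ∨ l = n) ∨
      (0 < k ∧ k < n ∧ 0 < l ∧ l < n) := by omega
  rcases this with ⟨rfl | rfl, rfl⟩ | ⟨rfl, rfl | rfl⟩ | ⟨hk0, hkn, hl0, hln⟩
  · simp [he, h.left_zero]
  · simp [he, h.left_last]
  · simp [he, h.right_zero]
  · simp [he, h.right_last]
  · exact Or.inr (Or.inr ⟨k, l, hk0, hkn, hl0, hln, hkl, he⟩)

theorem left_eq_one_or_right_eq_one (hc : IsOneTwoThreeCoeffs n c)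
    (h : IsNormalizedFactorization n a b c) (hi0 : 0 < i) (hin : i < n)
    (hj : j = i ∨ j = i + n) (h1 : c j = 1) : a i = 1 ∨ b i = 1 := by
  rcases h.eq_left_or_eq_right_or_exists_interior hi0 hin hj with
    he | he | ⟨k, l, hk0, hkn, hl0, hln, -, he⟩
  · exact Or.inl (he ▸ h1)
  · exact Or.inr (he ▸ h1)
  · linarith [h.one_le_left hc hk0 hkn, h.one_le_right hc hl0 hln]

theorem eq_one_iff_add_eq_one (hc : IsOneTwoThreeCoeffs n c)
    (h : IsNormalizedFactorization n a b c) (hi0 : 0 < i) (hin : i < n) :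
    c i = 1 ↔ c (i + n) = 1 := by
  have transfer :
      ∀ j j', (j = i ∨ j = i + n) → (j' = i ∨ j' = i + n) → c j = 1 → c j' = 1 := by
    intro j j' hj hj' h1
    refine le_antisymm ?_ (hc.one_le hi0 hin hj')
    rcases h.left_eq_one_or_right_eq_one hc hi0 hin hj h1 with h1 | h1
    · exact h1 ▸ h.le_left hin.le hj'
    · exact h1 ▸ h.le_right hin.le hj'
  exact ⟨transfer _ _ (Or.inl rfl) (Or.inr rfl), transfer _ _ (Or.inr rfl) (Or.inl rfl)⟩

theorem exists_interior_eq_one (hc : IsOneTwoThreeCoeffs n c)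
    (h : IsNormalizedFactorization n a b c) (hi0 : 0 < i) (hin : i < n)
    (hj : j = i ∨ j = i + n) (h2 : c j = 2) (h22 : ¬(c i = 2 ∧ c (i + n) = 2)) :
    ∃ k l, 0 < k ∧ k < n ∧ 0 < l ∧ l < n ∧ k + l = j ∧ a k = 1 ∧ b l = 1 := by
  obtain ⟨j', hj', h3⟩ : ∃ j', (j' = i ∨ j' = i + n) ∧ c j' = 3 := by
    have hiff := h.eq_one_iff_add_eq_one hc hi0 hin
    have hi := hc.mem_of_interior hi0 hin (Or.inl rfl)
    have hin' := hc.mem_of_interior hi0 hin (Or.inr rfl)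
    rcases hj with rfl | rfl <;> grind
  have ha3 : 3 ≤ a i := h3 ▸ h.le_left hin.le hj'
  have hb3 : 3 ≤ b i := h3 ▸ h.le_right hin.le hj'
  rcases h.eq_left_or_eq_right_or_exists_interior hi0 hin hj with
    he | he | ⟨k, l, hk0, hkn, hl0, hln, hkl, he⟩
  · linarith
  · linarith
  · have hak := h.one_le_left hc hk0 hkn
    have hbl := h.one_le_right hc hl0 hln
    exact ⟨k, l, hk0, hkn, hl0, hln, hkl, by linarith, by linarith⟩

end IsNormalizedFactorization

noncomputable def normalCoeff (n : ℕ) (c a : ℕ → ℝ) (i : ℕ) : ℝ :=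
  if i = 0 ∨ i = n then 0
  else if a i = 1 then 1
  else if c i = 2 ∧ c (i + n) = 2 then 2 else 3

section NormalCoeff

variable {n i j : ℕ} {a c : ℕ → ℝ}

@[simp]
theorem normalCoeff_zero : normalCoeff n c a 0 = 0 := by simp [normalCoeff]

@[simp]
theorem normalCoeff_self : normalCoeff n c a n = 0 := by simp [normalCoeff]

theorem normalCoeff_of_interior (hi0 : 0 < i) (hin : i < n) :
    normalCoeff n c a i = if a i = 1 then 1 else if c i = 2 ∧ c (i + n) = 2 then 2 else 3 :=
  if_neg (by omega)

theorem normalCoeff_le_three : normalCoeff n c a i ≤ 3 := by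
  unfold normalCoeff
  split_ifs <;> norm_num

theorem one_le_normalCoeff (hi0 : 0 < i) (hin : i < n) : 1 ≤ normalCoeff n c a i := by
  rw [normalCoeff_of_interior hi0 hin]
  split_ifs <;> norm_num

theorem two_le_normalCoeff (hi0 : 0 < i) (hin : i < n) (ha : a i ≠ 1) :
    2 ≤ normalCoeff n c a i := by
  rw [normalCoeff_of_interior hi0 hin, if_neg ha]
  split_ifs <;> norm_num

theorem normalCoeff_of_eq_one (hi0 : 0 < i) (hin : i < n) (ha : a i = 1) :
    normalCoeff n c a i = 1 := by
  rw [normalCoeff_of_interior hi0 hin, if_pos ha]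

theorem normalCoeff_of_eq_two (hi0 : 0 < i) (hin : i < n) (h2 : c i = 2) (h2' : c (i + n) = 2)
    (ha : c i ≤ a i) : normalCoeff n c a i = 2 := by
  rw [normalCoeff_of_interior hi0 hin, if_neg (by linarith), if_pos ⟨h2, h2'⟩]

theorem normalCoeff_of_eq_three (hi0 : 0 < i) (hin : i < n) (h3 : c i = 3 ∨ c (i + n) = 3)
    (ha : ∀ j, j = i ∨ j = i + n → c j ≤ a i) : normalCoeff n c a i = 3 := by
  have := ha i (Or.inl rfl)
  have := ha (i + n) (Or.inr rfl)
  rw [normalCoeff_of_interior hi0 hin, if_neg, if_neg] <;> rcases h3 with h3 | h3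
  all_goals first | (rintro ⟨h2, h2'⟩; linarith) | (intro h1; linarith)

theorem le_normalCoeff (hc : IsOneTwoThreeCoeffs n c) (hi : i ≤ n) (hj : j = i ∨ j = i + n)
    (ha : c j ≤ a i) : c j ≤ normalCoeff n c a i := by
  rcases Nat.eq_zero_or_pos i with rfl | hi0
  · rcases hj with rfl | rfl <;> simp [hc.zero, hc.mid]
  rcases hi.eq_or_lt with rfl | hin
  · rcases hj with rfl | rfl <;> simp [hc.mid, ← two_mul, hc.last]
  rw [normalCoeff_of_interior hi0 hin]
  split_ifs with h1 h22
  · exact h1 ▸ ha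
  · rcases hj with rfl | rfl
    exacts [h22.1.le, h22.2.le]
  · exact hc.le_three (by omega)

end NormalCoeff

namespace IsNormalizedFactorization

variable {n i j k l : ℕ} {a b c : ℕ → ℝ}

theorem le_normalCoeff_add (hc : IsOneTwoThreeCoeffs n c) (h : IsNormalizedFactorization n a b c)
    (hk : k ≤ n) (hl : l ≤ n) : c (k + l) ≤ normalCoeff n c a k + normalCoeff n c b l := by
  have : k = 0 ∨ k = n ∨ l = 0 ∨ l = n ∨ (0 < k ∧ k < n ∧ 0 < l ∧ l < n) := by omega
  rcases this with rfl | rfl | rfl | rfl | ⟨hk0, hkn, hl0, hln⟩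
  · rw [normalCoeff_zero, zero_add, zero_add]
    exact le_normalCoeff hc hl (Or.inl rfl) (h.le_right hl (Or.inl rfl))
  · rw [normalCoeff_self, zero_add, add_comm]
    exact le_normalCoeff hc hl (Or.inr rfl) (h.le_right hl (Or.inr rfl))
  · rw [normalCoeff_zero, add_zero, add_zero]
    exact le_normalCoeff hc hk (Or.inl rfl) (h.le_left hk (Or.inl rfl))
  · rw [normalCoeff_self, add_zero]
    exact le_normalCoeff hc hk (Or.inr rfl) (h.le_left hk (Or.inr rfl))
  by_cases h11 : a k = 1 ∧ b l = 1
  · rw [normalCoeff_of_eq_one hk0 hkn h11.1, normalCoeff_of_eq_one hl0 hln h11.2]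
    linarith [h.le_add hk hl rfl]
  · have h3 : 3 ≤ normalCoeff n c a k + normalCoeff n c b l := by
      rcases not_and_or.1 h11 with ha | hb
      · linarith [two_le_normalCoeff (c := c) hk0 hkn ha,
          one_le_normalCoeff (c := c) (a := b) hl0 hln]
      · linarith [one_le_normalCoeff (c := c) (a := a) hk0 hkn,
          two_le_normalCoeff (c := c) hl0 hln hb]
    linarith [hc.le_three (show k + l ≤ 2 * n by omega)]

theorem tropConv_normalCoeff_le (hc : IsOneTwoThreeCoeffs n c)
    (h : IsNormalizedFactorization n a b c) (hj : j ≤ 2 * n) :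
    tropConv n n (normalCoeff n c a) (normalCoeff n c b) j ≤ c j := by
  by_cases hj0 : j = 0
  · simpa [hj0, hc.zero] using tropConv_le_add (a := normalCoeff n c a) (b := normalCoeff n c b)
      (Nat.zero_le n) (Nat.zero_le n) (add_zero 0)
  by_cases hjn : j = n
  · simpa [hjn, hc.mid] using tropConv_le_add (a := normalCoeff n c a) (b := normalCoeff n c b)
      (Nat.zero_le n) le_rfl (zero_add n)
  by_cases hj2n : j = 2 * n
  · simpa [hj2n, hc.last] using tropConv_le_add (a := normalCoeff n c a)
      (b := normalCoeff n c b) le_rfl le_rfl (two_mul n).symm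
  obtain ⟨i, hi0, hin, hji⟩ := exists_interior_of_ne hj hj0 hjn hj2n
  have hA := tropConv_le_left_of_eq_zero (a := normalCoeff n c a) (b := normalCoeff n c b)
    normalCoeff_zero normalCoeff_self hin.le hji
  rcases hc.mem_of_interior hi0 hin hji with h1 | h2 | h3
  · rcases h.left_eq_one_or_right_eq_one hc hi0 hin hji h1 with ha | hb
    · exact hA.trans_eq ((normalCoeff_of_eq_one hi0 hin ha).trans h1.symm)
    · exact (tropConv_le_right_of_eq_zero normalCoeff_zero normalCoeff_self hin.le hji).trans_eq
        ((normalCoeff_of_eq_one hi0 hin hb).trans h1.symm)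
  · by_cases h22 : c i = 2 ∧ c (i + n) = 2
    · exact hA.trans_eq ((normalCoeff_of_eq_two hi0 hin h22.1 h22.2
        (h.le_left hin.le (Or.inl rfl))).trans h2.symm)
    obtain ⟨k, l, hk0, hkn, hl0, hln, hkl, hak, hbl⟩ :=
      h.exists_interior_eq_one hc hi0 hin hji h2 h22
    calc _ ≤ normalCoeff n c a k + normalCoeff n c b l := tropConv_le_add hkn.le hln.le hkl
      _ = c j := by
        rw [normalCoeff_of_eq_one hk0 hkn hak, normalCoeff_of_eq_one hl0 hln hbl, h2]
        norm_num
  · exact (hA.trans normalCoeff_le_three).trans_eq h3.symm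

theorem normalize (hc : IsOneTwoThreeCoeffs n c) (h : IsNormalizedFactorization n a b c) :
    IsNormalizedFactorization n (normalCoeff n c a) (normalCoeff n c b) c :=
  ⟨fun _ hj => le_antisymm (h.tropConv_normalCoeff_le hc hj) <|
      le_tropConv (by omega) fun _ _ hk hl hkl => hkl ▸ h.le_normalCoeff_add hc hk hl,
    normalCoeff_zero, normalCoeff_self, normalCoeff_zero, normalCoeff_self⟩

theorem normalCoeff_pair_of_eq_one (hc : IsOneTwoThreeCoeffs n c)
    (h : IsNormalizedFactorization n a b c) (hi0 : 0 < i) (hin : i < n) (h1 : c i = 1) :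
    (normalCoeff n c a i = 1 ∧ normalCoeff n c b i = 1) ∨
      (normalCoeff n c a i = 1 ∧ normalCoeff n c b i = 3) ∨
      (normalCoeff n c a i = 3 ∧ normalCoeff n c b i = 1) := by
  have hcoeff : ∀ x : ℕ → ℝ, normalCoeff n c x i = if x i = 1 then 1 else 3 := by
    intro x
    rw [normalCoeff_of_interior hi0 hin, h1]
    norm_num
  rw [hcoeff a, hcoeff b]
  rcases h.left_eq_one_or_right_eq_one hc hi0 hin (Or.inl rfl) h1 with ha | hb
  · by_cases hb : b i = 1 <;> simp [ha, hb]
  · by_cases ha : a i = 1 <;> simp [ha, hb]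

end IsNormalizedFactorization

theorem normalized_factorization_general (n : ℕ) (c : ℕ → ℝ)
    (hc0 : c 0 = 0) (hcn : c n = 0) (hc2n : c (2 * n) = 0)
    (hc : ∀ i ≤ 2 * n, i ≠ 0 → i ≠ n → i ≠ 2 * n →
      c i = 1 ∨ c i = 2 ∨ c i = 3)
    (hfact : ∃ a b : ℕ → ℝ, ∀ j ≤ 2 * n, tropConv n n a b j = c j) :
    ∃ a b : ℕ → ℝ, (∀ j ≤ 2 * n, tropConv n n a b j = c j) ∧
      a 0 = 0 ∧ a n = 0 ∧ b 0 = 0 ∧ b n = 0 ∧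
      ∀ i, 0 < i → i < n →
        ((c i = 1 →
            ((a i = 1 ∧ b i = 1) ∨ (a i = 1 ∧ b i = 3) ∨ (a i = 3 ∧ b i = 1)) ∧
            c (i + n) = 1) ∧
         (c (i + n) = 1 →
            c i = 1 ∧
            ((a i = 1 ∧ b i = 1) ∨ (a i = 1 ∧ b i = 3) ∨ (a i = 3 ∧ b i = 1))) ∧
         (c i = 2 → c (i + n) = 2 → a i = 2 ∧ b i = 2) ∧
         (c i = 3 ∨ c (i + n) = 3 → a i = 3 ∧ b i = 3)) := by
  have hcoeffs : IsOneTwoThreeCoeffs n c := ⟨hc0, hcn, hc2n, hc⟩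
  obtain ⟨a₀, b₀, hab₀⟩ := hfact
  obtain ⟨a, b, h⟩ := exists_isNormalizedFactorization hc0 hcn hc2n hab₀
  have hN := h.normalize hcoeffs
  refine ⟨_, _, hN.conv_eq, hN.left_zero, hN.left_last, hN.right_zero, hN.right_last,
    fun i hi0 hin => ?_⟩
  have hiff := h.eq_one_iff_add_eq_one hcoeffs hi0 hin
  have hpair := h.normalCoeff_pair_of_eq_one hcoeffs hi0 hin
  have ha : ∀ j, j = i ∨ j = i + n → c j ≤ a i := fun _ => h.le_left hin.le
  have hb : ∀ j, j = i ∨ j = i + n → c j ≤ b i := fun _ => h.le_right hin.le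
  exact ⟨fun h1 => ⟨hpair h1, hiff.1 h1⟩, fun h1 => ⟨hiff.2 h1, hpair (hiff.2 h1)⟩,
    fun h2 h2' => ⟨normalCoeff_of_eq_two hi0 hin h2 h2' (ha i (Or.inl rfl)),
      normalCoeff_of_eq_two hi0 hin h2 h2' (hb i (Or.inl rfl))⟩,
    fun h3 => ⟨normalCoeff_of_eq_three hi0 hin h3 ha, normalCoeff_of_eq_three hi0 hin h3 hb⟩⟩

/-- Lemma 5: for a factorable polynomial of the equal slope, equal degree, concave
type with `c₀ = cₙ = c_{2n} = 0` and all other coefficients in `{1,2,3}`, a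
factorization of a normalized special form exists. -/
theorem normalized_factorization (n : ℕ) (hn : 2 ≤ n) (c : ℕ → ℝ)
    (hc0 : c 0 = 0) (hcn : c n = 0) (hc2n : c (2 * n) = 0)
    (hc : ∀ i ≤ 2 * n, i ≠ 0 → i ≠ n → i ≠ 2 * n →
      c i = 1 ∨ c i = 2 ∨ c i = 3)
    (hfact : ∃ a b : ℕ → ℝ, ∀ j ≤ 2 * n, tropConv n n a b j = c j) :
    ∃ a b : ℕ → ℝ, (∀ j ≤ 2 * n, tropConv n n a b j = c j) ∧
      a 0 = 0 ∧ a n = 0 ∧ b 0 = 0 ∧ b n = 0 ∧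
      ∀ i, 0 < i → i < n →
        ((c i = 1 →
            ((a i = 1 ∧ b i = 1) ∨ (a i = 1 ∧ b i = 3) ∨ (a i = 3 ∧ b i = 1)) ∧
            c (i + n) = 1) ∧
         (c (i + n) = 1 →
            c i = 1 ∧
            ((a i = 1 ∧ b i = 1) ∨ (a i = 1 ∧ b i = 3) ∨ (a i = 3 ∧ b i = 1))) ∧
         (c i = 2 → c (i + n) = 2 → a i = 2 ∧ b i = 2) ∧
         (c i = 3 ∨ c (i + n) = 3 → a i = 3 ∧ b i = 3)) :=
  normalized_factorization_general n c hc0 hcn hc2n hc hfact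
end

section
/- For all positive integers n and N with 256·N⁸ < n, there exist real numbers x_{ij}, y_{ij} (1 ≤ i, j ≤ N) and z_i (1 ≤ i ≤ N), all strictly between 0 and n/4, such that: x_{ij} + y_{ij} = z_i for all i, j; the z_i are pairwise distinct; the values in the combined list consisting of all sums x_{ij} + y_{rs} with (r,s) ≠ (i,j), all sums x_{ij} + x_{rs}, and all sums y_{ij} + y_{rs} are pairwise distinct (apart from the equalities forced by commutativity of addition among the x-sums and among the y-sums); none of these sums equals any z_i; and none of these sums equals any x_{ij} or y_{rs}. -/
/-!
Take `x` Sidon with values in a window `[A, 2A)`: here `x_{ij} = A + k + 2N²k²` for the index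
`k = iN + j < N²`, which is Sidon because `2N²` exceeds every sum of two such `k`. Put
`z_i = M(i + 1)` with `M = 6A` and `y_{ij} = z_i - x_{ij}`. Every sum in the statement is then a
multiple `cM` of `M` plus a signed sum of at most three `x`s, and two such remainders differ by
less than `M`. Hence an equality between two sums forces equal carries `c` and equal remainders,
and the Sidon property of `x` decides the latter.
-/

open Function

theorem eq_of_mul_add_eq_mul_add {R : Type*} [CommRing R] [LinearOrder R] [IsStrictOrderedRing R]
    {M e e' : R} {c c' : ℕ} (h : M * c + e = M * c' + e') (he : |e - e'| < M) :
    c = c' ∧ e = e' := by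
  obtain rfl : c = c' := by
    by_contra hne
    have hM : 0 < M := (abs_nonneg _).trans_lt he
    have hone : (1 : R) ≤ |(c' : R) - c| := by
      exact_mod_cast Int.one_le_abs (sub_ne_zero.2 (Int.natCast_inj.not.2 (Ne.symm hne)))
    have hdiff : |e - e'| = M * |(c' : R) - c| := by
      rw [← abs_of_pos hM, ← abs_mul]
      congr 1
      linear_combination h
    nlinarith
  exact ⟨rfl, add_left_cancel h⟩

def IsSidon {ι R : Type*} [Add R] (f : ι → R) : Prop :=
  ∀ a b c d, f a + f b = f c + f d → (a = c ∧ b = d) ∨ (a = d ∧ b = c)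

namespace IsSidon

variable {ι κ R : Type*}

theorem injective [Add R] {f : ι → R} (hf : IsSidon f) : Injective f :=
  fun a b hab => (hf a a b b (by rw [hab])).elim (·.1) (·.1)

theorem comp [Add R] {f : ι → R} (hf : IsSidon f) {g : κ → ι} (hg : Injective g) :
    IsSidon (f ∘ g) := by
  intro a b c d h
  simpa only [hg.eq_iff] using hf _ _ _ _ h

theorem const_add [AddCommGroup R] {f : ι → R} (hf : IsSidon f) (A : R) :
    IsSidon (fun a => A + f a) := by
  intro a b c d h
  rw [add_add_add_comm, add_add_add_comm A _ A] at h
  exact hf a b c d (add_left_cancel h)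

end IsSidon

def quadraticSidon (R : Type*) [CommRing R] (m : ℕ) (k : Fin m) : R := k + 2 * m * k ^ 2

section Quadratic

variable {R : Type*} [CommRing R] [LinearOrder R] [IsStrictOrderedRing R]

theorem isSidon_quadraticSidon (m : ℕ) : IsSidon (quadraticSidon R m) := by
  intro a b c d h
  have hlt : ∀ k : Fin m, ((k : ℕ) : R) < m := fun k => by exact_mod_cast k.isLt
  have hnn : ∀ k : Fin m, (0 : R) ≤ (k : ℕ) := fun k => Nat.cast_nonneg _
  obtain ⟨hsq, hsum⟩ := eq_of_mul_add_eq_mul_add (M := (2 * m : R))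
    (c := a ^ 2 + b ^ 2) (c' := c ^ 2 + d ^ 2) (e := a + b) (e' := c + d)
    (by push_cast; unfold quadraticSidon at h; linear_combination h)
    (abs_sub_lt_iff.2 ⟨by linarith [hlt a, hlt b, hnn c, hnn d],
      by linarith [hlt c, hlt d, hnn a, hnn b]⟩)
  have hsum : (a : ℤ) + b = c + d := by exact_mod_cast hsum
  have hsq : (a : ℤ) ^ 2 + b ^ 2 = c ^ 2 + d ^ 2 := by exact_mod_cast hsq
  have hprod : 2 * (((a : ℤ) - c) * ((a : ℤ) - d)) = 0 := by
    linear_combination hsq - ((b : ℤ) + c + d - a) * hsum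
  rcases mul_eq_zero.1 ((mul_eq_zero.1 hprod).resolve_left two_ne_zero) with h1 | h1
  · left; constructor <;> ext <;> omega
  · right; constructor <;> ext <;> omega

end Quadratic

structure Layered {R κ : Type*} [CommRing R] [LinearOrder R] (x y : κ → κ → R) (z : κ → R)
    (ρ : κ → ℕ) (A M : R) : Prop where
  le_x : ∀ i j, A ≤ x i j
  x_lt : ∀ i j, x i j < 2 * A
  x_add_y : ∀ i j, x i j + y i j = z i
  z_eq : ∀ i, z i = M * (ρ i + 1)
  six_mul_le : 6 * A ≤ M

namespace Layered

variable {R κ : Type*} [CommRing R] [LinearOrder R]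
  {x y : κ → κ → R} {z : κ → R} {ρ : κ → ℕ} {A M : R}

theorem y_eq (h : Layered x y z ρ A M) (i j : κ) : y i j = M * (ρ i + 1) - x i j := by
  rw [← h.z_eq, ← h.x_add_y i j]; ring

variable [IsStrictOrderedRing R]

theorem pos (h : Layered x y z ρ A M) (i : κ) : 0 < A := by
  linarith [h.le_x i i, h.x_lt i i]

theorem le_z (h : Layered x y z ρ A M) (i : κ) : M ≤ z i := by
  have hM : 0 ≤ M := by linarith [h.pos i, h.six_mul_le]
  rw [h.z_eq]
  exact le_mul_of_one_le_right hM (le_add_of_nonneg_left (Nat.cast_nonneg _))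

theorem z_pos (h : Layered x y z ρ A M) (i : κ) : 0 < z i := by
  linarith [h.le_z i, h.six_mul_le, h.pos i]

theorem x_pos (h : Layered x y z ρ A M) (i j : κ) : 0 < x i j :=
  (h.pos i).trans_le (h.le_x i j)

theorem x_lt_z (h : Layered x y z ρ A M) (i j : κ) : x i j < z i := by
  linarith [h.x_lt i j, h.le_z i, h.six_mul_le, h.pos i]

theorem y_lt_z (h : Layered x y z ρ A M) (i j : κ) : y i j < z i := by
  linarith [h.x_add_y i j, h.x_pos i j]

theorem sub_lt_y (h : Layered x y z ρ A M) (i j : κ) : M - 2 * A < y i j := by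
  linarith [h.x_add_y i j, h.x_lt i j, h.le_z i]

theorem y_pos (h : Layered x y z ρ A M) (i j : κ) : 0 < y i j := by
  linarith [h.sub_lt_y i j, h.six_mul_le, h.pos i]

theorem z_injective (h : Layered x y z ρ A M) (hρ : Injective ρ) : Injective z := by
  intro a b hab
  have hM : M ≠ 0 := by linarith [h.pos a, h.six_mul_le]
  rw [h.z_eq, h.z_eq] at hab
  exact hρ (by exact_mod_cast add_right_cancel (mul_left_cancel₀ hM hab))

theorem eq_of_x_add_y_eq (h : Layered x y z ρ A M) (hS : IsSidon (uncurry x))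
    (i j r s i' j' r' s' : κ) (hne : (r, s) ≠ (i, j))
    (heq : x i j + y r s = x i' j' + y r' s') : (i, j, r, s) = (i', j', r', s') := by
  obtain ⟨-, hres⟩ := eq_of_mul_add_eq_mul_add (M := M) (c := ρ r + 1) (c' := ρ r' + 1)
    (e := x i j - x r s) (e' := x i' j' - x r' s')
    (by push_cast; linear_combination heq - h.y_eq r s + h.y_eq r' s')
    (abs_sub_lt_iff.2
      ⟨by linarith [h.x_lt i j, h.le_x r s, h.le_x i' j', h.x_lt r' s', h.six_mul_le, h.pos i],
        by linarith [h.le_x i j, h.x_lt r s, h.x_lt i' j', h.le_x r' s', h.six_mul_le, h.pos i]⟩)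
  rcases hS (i, j) (r', s') (i', j') (r, s) (by simp only [uncurry_apply_pair]; linarith) with
    ⟨h1, h2⟩ | ⟨h1, -⟩
  · simp only [Prod.mk.injEq] at h1 h2 ⊢
    exact ⟨h1.1, h1.2, h2.1.symm, h2.2.symm⟩
  · exact absurd h1.symm hne

theorem eq_of_y_add_y_eq (h : Layered x y z ρ A M) (hS : IsSidon (uncurry x))
    (i j r s i' j' r' s' : κ) (heq : y i j + y r s = y i' j' + y r' s') :
    ((i, j) = (i', j') ∧ (r, s) = (r', s')) ∨ ((i, j) = (r', s') ∧ (r, s) = (i', j')) := by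
  obtain ⟨-, hres⟩ := eq_of_mul_add_eq_mul_add (M := M) (c := ρ i + ρ r + 2)
    (c' := ρ i' + ρ r' + 2) (e := -(x i j + x r s)) (e' := -(x i' j' + x r' s'))
    (by push_cast; linear_combination heq - h.y_eq i j - h.y_eq r s + h.y_eq i' j' + h.y_eq r' s')
    (abs_sub_lt_iff.2
      ⟨by linarith [h.le_x i j, h.le_x r s, h.x_lt i' j', h.x_lt r' s', h.six_mul_le, h.pos i],
        by linarith [h.x_lt i j, h.x_lt r s, h.le_x i' j', h.le_x r' s', h.six_mul_le, h.pos i]⟩)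
  exact hS (i, j) (r, s) (i', j') (r', s') (by simp only [uncurry_apply_pair]; linarith)

theorem x_add_y_ne_x_add_x (h : Layered x y z ρ A M) (i j r s i' j' r' s' : κ) :
    x i j + y r s ≠ x i' j' + x r' s' := by
  linarith [h.le_x i j, h.sub_lt_y r s, h.x_lt i' j', h.x_lt r' s', h.six_mul_le, h.pos i]

theorem x_add_y_ne_y_add_y (h : Layered x y z ρ A M) (i j r s i' j' r' s' : κ) :
    x i j + y r s ≠ y i' j' + y r' s' := by
  intro heq
  obtain ⟨-, hres⟩ := eq_of_mul_add_eq_mul_add (M := M) (c := ρ r + 1)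
    (c' := ρ i' + ρ r' + 2) (e := x i j - x r s) (e' := -(x i' j' + x r' s'))
    (by push_cast; linear_combination heq - h.y_eq r s + h.y_eq i' j' + h.y_eq r' s')
    (abs_sub_lt_iff.2
      ⟨by linarith [h.x_lt i j, h.le_x r s, h.x_lt i' j', h.x_lt r' s', h.six_mul_le, h.pos i],
        by linarith [h.le_x i j, h.x_lt r s, h.le_x i' j', h.le_x r' s', h.six_mul_le, h.pos i]⟩)
  linarith [h.le_x i j, h.x_lt r s, h.le_x i' j', h.le_x r' s', h.pos i]

theorem x_add_x_ne_y_add_y (h : Layered x y z ρ A M) (i j r s i' j' r' s' : κ) :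
    x i j + x r s ≠ y i' j' + y r' s' := by
  linarith [h.x_lt i j, h.x_lt r s, h.sub_lt_y i' j', h.sub_lt_y r' s', h.six_mul_le, h.pos i]

theorem x_add_y_ne_z (h : Layered x y z ρ A M) (hS : IsSidon (uncurry x)) (i j r s t : κ)
    (hne : (r, s) ≠ (i, j)) : x i j + y r s ≠ z t := by
  intro heq
  obtain ⟨-, hres⟩ := eq_of_mul_add_eq_mul_add (M := M) (c := ρ r + 1) (c' := ρ t + 1)
    (e := x i j - x r s) (e' := 0)
    (by push_cast; linear_combination heq - h.y_eq r s + h.z_eq t)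
    (abs_sub_lt_iff.2
      ⟨by linarith [h.x_lt i j, h.le_x r s, h.six_mul_le, h.pos i],
        by linarith [h.le_x i j, h.x_lt r s, h.six_mul_le, h.pos i]⟩)
  exact hne <| hS.injective (a₁ := (r, s)) (a₂ := (i, j)) <| by
    simp only [uncurry_apply_pair]; linarith

theorem x_add_x_ne_z (h : Layered x y z ρ A M) (i j r s t : κ) : x i j + x r s ≠ z t := by
  linarith [h.x_lt i j, h.x_lt r s, h.le_z t, h.six_mul_le, h.pos i]

theorem y_add_y_ne_z (h : Layered x y z ρ A M) (i j r s t : κ) : y i j + y r s ≠ z t := by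
  intro heq
  obtain ⟨-, hres⟩ := eq_of_mul_add_eq_mul_add (M := M) (c := ρ i + ρ r + 2) (c' := ρ t + 1)
    (e := -(x i j + x r s)) (e' := 0)
    (by push_cast; linear_combination heq - h.y_eq i j - h.y_eq r s + h.z_eq t)
    (abs_sub_lt_iff.2
      ⟨by linarith [h.le_x i j, h.le_x r s, h.six_mul_le, h.pos i],
        by linarith [h.x_lt i j, h.x_lt r s, h.six_mul_le, h.pos i]⟩)
  linarith [h.le_x i j, h.le_x r s, h.pos i]

theorem x_add_y_ne_x (h : Layered x y z ρ A M) (i j r s t u : κ) : x i j + y r s ≠ x t u := by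
  linarith [h.le_x i j, h.sub_lt_y r s, h.x_lt t u, h.six_mul_le, h.pos i]

theorem x_add_y_ne_y (h : Layered x y z ρ A M) (i j r s t u : κ) : x i j + y r s ≠ y t u := by
  intro heq
  obtain ⟨-, hres⟩ := eq_of_mul_add_eq_mul_add (M := M) (c := ρ r + 1) (c' := ρ t + 1)
    (e := x i j - x r s) (e' := -x t u)
    (by push_cast; linear_combination heq - h.y_eq r s + h.y_eq t u)
    (abs_sub_lt_iff.2
      ⟨by linarith [h.x_lt i j, h.le_x r s, h.x_lt t u, h.six_mul_le, h.pos i],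
        by linarith [h.le_x i j, h.x_lt r s, h.le_x t u, h.six_mul_le, h.pos i]⟩)
  linarith [h.le_x i j, h.x_lt r s, h.le_x t u]

theorem x_add_x_ne_x (h : Layered x y z ρ A M) (i j r s t u : κ) : x i j + x r s ≠ x t u := by
  linarith [h.le_x i j, h.le_x r s, h.x_lt t u]

theorem x_add_x_ne_y (h : Layered x y z ρ A M) (i j r s t u : κ) : x i j + x r s ≠ y t u := by
  intro heq
  obtain ⟨hcarry, -⟩ := eq_of_mul_add_eq_mul_add (M := M) (c := 0) (c' := ρ t + 1)
    (e := x i j + x r s) (e' := -x t u)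
    (by push_cast; linear_combination heq + h.y_eq t u)
    (abs_sub_lt_iff.2
      ⟨by linarith [h.x_lt i j, h.x_lt r s, h.x_lt t u, h.six_mul_le],
        by linarith [h.le_x i j, h.le_x r s, h.le_x t u, h.six_mul_le, h.pos i]⟩)
  omega

theorem y_add_y_ne_x (h : Layered x y z ρ A M) (i j r s t u : κ) : y i j + y r s ≠ x t u := by
  linarith [h.sub_lt_y i j, h.sub_lt_y r s, h.x_lt t u, h.six_mul_le, h.pos i]

theorem y_add_y_ne_y (h : Layered x y z ρ A M) (i j r s t u : κ) : y i j + y r s ≠ y t u := by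
  intro heq
  obtain ⟨-, hres⟩ := eq_of_mul_add_eq_mul_add (M := M) (c := ρ i + ρ r + 2) (c' := ρ t + 1)
    (e := -(x i j + x r s)) (e' := -x t u)
    (by push_cast; linear_combination heq - h.y_eq i j - h.y_eq r s + h.y_eq t u)
    (abs_sub_lt_iff.2
      ⟨by linarith [h.le_x i j, h.le_x r s, h.x_lt t u, h.six_mul_le, h.pos i],
        by linarith [h.x_lt i j, h.x_lt r s, h.le_x t u, h.six_mul_le, h.pos i]⟩)
  linarith [h.le_x i j, h.le_x r s, h.x_lt t u]

end Layered

section Quadratic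

variable {R : Type*} [CommRing R] [LinearOrder R] [IsStrictOrderedRing R]

theorem quadraticSidon_nonneg {m : ℕ} (k : Fin m) : 0 ≤ quadraticSidon R m k := by
  unfold quadraticSidon; positivity

theorem quadraticSidon_lt {m : ℕ} (k : Fin m) : quadraticSidon R m k < 3 * m ^ 3 := by
  have hk : ((k : ℕ) : R) + 1 ≤ m := by exact_mod_cast k.isLt
  have hk0 : (0 : R) ≤ (k : ℕ) := Nat.cast_nonneg _
  unfold quadraticSidon
  nlinarith [mul_le_mul hk hk (by positivity) (by linarith), mul_nonneg hk0 hk0]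

end Quadratic

theorem level_lt_quarter {N n : ℕ} (h : 256 * N ^ 8 < n) (i : Fin N) :
    6 * (3 * ((N * N : ℕ) : ℝ) ^ 3) * ((i : ℕ) + 1) < n / 4 := by
  have hi : (i : ℕ) + 1 ≤ N := i.isLt
  have hN : N ^ 7 ≤ N ^ 8 := Nat.pow_le_pow_right i.pos (by norm_num)
  have hnat : 6 * (3 * (N * N) ^ 3) * ((i : ℕ) + 1) * 4 < n :=
    calc 6 * (3 * (N * N) ^ 3) * ((i : ℕ) + 1) * 4 = 72 * N ^ 6 * (i + 1) := by ring
      _ ≤ 72 * N ^ 6 * N := by gcongr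
      _ = 72 * N ^ 7 := by ring
      _ < n := by linarith
  rw [lt_div_iff₀ (by norm_num)]
  exact_mod_cast hnat

theorem generic_sums_exist_general (n N : ℕ) (h : 256 * N ^ 8 < n) :
    ∃ (x y : Fin N → Fin N → ℝ) (z : Fin N → ℝ),
      (∀ i j, 0 < x i j ∧ x i j < (n : ℝ) / 4) ∧
      (∀ i j, 0 < y i j ∧ y i j < (n : ℝ) / 4) ∧
      (∀ i, 0 < z i ∧ z i < (n : ℝ) / 4) ∧
      (∀ i j, x i j + y i j = z i) ∧
      Function.Injective z ∧
      -- the sums x_{ij} + y_{rs} with (r,s) ≠ (i,j) are pairwise distinct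
      (∀ i j r s i' j' r' s', (r, s) ≠ (i, j) → (r', s') ≠ (i', j') →
        x i j + y r s = x i' j' + y r' s' → (i, j, r, s) = (i', j', r', s')) ∧
      -- the sums x_{ij} + x_{rs} are pairwise distinct up to commutativity
      (∀ i j r s i' j' r' s', x i j + x r s = x i' j' + x r' s' →
        ((i, j) = (i', j') ∧ (r, s) = (r', s')) ∨
        ((i, j) = (r', s') ∧ (r, s) = (i', j'))) ∧
      -- the sums y_{ij} + y_{rs} are pairwise distinct up to commutativity
      (∀ i j r s i' j' r' s', y i j + y r s = y i' j' + y r' s' →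
        ((i, j) = (i', j') ∧ (r, s) = (r', s')) ∨
        ((i, j) = (r', s') ∧ (r, s) = (i', j'))) ∧
      -- sums of different kinds are distinct from each other
      (∀ i j r s i' j' r' s', (r, s) ≠ (i, j) →
        x i j + y r s ≠ x i' j' + x r' s') ∧
      (∀ i j r s i' j' r' s', (r, s) ≠ (i, j) →
        x i j + y r s ≠ y i' j' + y r' s') ∧
      (∀ i j r s i' j' r' s', x i j + x r s ≠ y i' j' + y r' s') ∧
      -- none of these sums equals any z_t
      (∀ i j r s t, (r, s) ≠ (i, j) → x i j + y r s ≠ z t) ∧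
      (∀ i j r s t, x i j + x r s ≠ z t) ∧
      (∀ i j r s t, y i j + y r s ≠ z t) ∧
      -- none of these sums equals any x_{tu} or y_{tu}
      (∀ i j r s t u, (r, s) ≠ (i, j) →
        x i j + y r s ≠ x t u ∧ x i j + y r s ≠ y t u) ∧
      (∀ i j r s t u, x i j + x r s ≠ x t u ∧ x i j + x r s ≠ y t u) ∧
      (∀ i j r s t u, y i j + y r s ≠ x t u ∧ y i j + y r s ≠ y t u) := by
  let A : ℝ := 3 * ((N * N : ℕ) : ℝ) ^ 3
  let x : Fin N → Fin N → ℝ := fun i j =>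
    A + quadraticSidon ℝ (N * N) (finProdFinEquiv (i, j))
  let z : Fin N → ℝ := fun i => 6 * A * ((i : ℕ) + 1)
  have hS : IsSidon (uncurry x) :=
    ((isSidon_quadraticSidon _).comp finProdFinEquiv.injective).const_add A
  have hL : Layered x (fun i j => z i - x i j) z Fin.val A (6 * A) :=
    { le_x := fun _ _ => le_add_of_nonneg_right (quadraticSidon_nonneg _)
      x_lt := fun _ _ => (add_lt_add_right (quadraticSidon_lt _) A).trans_eq (two_mul A).symm
      x_add_y := fun _ _ => add_sub_cancel _ _
      z_eq := fun _ => rfl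
      six_mul_le := le_rfl }
  have hz : ∀ i, z i < n / 4 := level_lt_quarter h
  refine ⟨x, fun i j => z i - x i j, z,
    fun i j => ⟨hL.x_pos i j, (hL.x_lt_z i j).trans (hz i)⟩,
    fun i j => ⟨hL.y_pos i j, (hL.y_lt_z i j).trans (hz i)⟩,
    fun i => ⟨hL.z_pos i, hz i⟩, hL.x_add_y, hL.z_injective Fin.val_injective,
    fun i j r s i' j' r' s' hne _ => hL.eq_of_x_add_y_eq hS i j r s i' j' r' s' hne,
    fun i j r s i' j' r' s' => hS (i, j) (r, s) (i', j') (r', s'), hL.eq_of_y_add_y_eq hS,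
    fun i j r s i' j' r' s' _ => hL.x_add_y_ne_x_add_x i j r s i' j' r' s',
    fun i j r s i' j' r' s' _ => hL.x_add_y_ne_y_add_y i j r s i' j' r' s',
    hL.x_add_x_ne_y_add_y, hL.x_add_y_ne_z hS, hL.x_add_x_ne_z, hL.y_add_y_ne_z,
    fun i j r s t u _ => ⟨hL.x_add_y_ne_x i j r s t u, hL.x_add_y_ne_y i j r s t u⟩,
    fun i j r s t u => ⟨hL.x_add_x_ne_x i j r s t u, hL.x_add_x_ne_y i j r s t u⟩,
    fun i j r s t u => ⟨hL.y_add_y_ne_x i j r s t u, hL.y_add_y_ne_y i j r s t u⟩⟩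

/-- Lemma 6: for `256·N⁸ < n` one can choose numbers `x_{ij}, y_{ij}, z_i` in
`(0, n/4)` with `x_{ij} + y_{ij} = z_i`, the `z_i` distinct, and all other sums
`x_{ij} + y_{rs}` (`(r,s) ≠ (i,j)`), `x_{ij} + x_{rs}`, `y_{ij} + y_{rs}`
pairwise distinct (apart from commutativity), distinct from all `z_i`, and
distinct from all `x_{ij}, y_{rs}`. -/
theorem generic_sums_exist (n N : ℕ) (hn : 0 < n) (hN : 0 < N)
    (h : 256 * N ^ 8 < n) :
    ∃ (x y : Fin N → Fin N → ℝ) (z : Fin N → ℝ),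
      (∀ i j, 0 < x i j ∧ x i j < (n : ℝ) / 4) ∧
      (∀ i j, 0 < y i j ∧ y i j < (n : ℝ) / 4) ∧
      (∀ i, 0 < z i ∧ z i < (n : ℝ) / 4) ∧
      (∀ i j, x i j + y i j = z i) ∧
      Function.Injective z ∧
      -- the sums x_{ij} + y_{rs} with (r,s) ≠ (i,j) are pairwise distinct
      (∀ i j r s i' j' r' s', (r, s) ≠ (i, j) → (r', s') ≠ (i', j') →
        x i j + y r s = x i' j' + y r' s' → (i, j, r, s) = (i', j', r', s')) ∧
      -- the sums x_{ij} + x_{rs} are pairwise distinct up to commutativity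
      (∀ i j r s i' j' r' s', x i j + x r s = x i' j' + x r' s' →
        ((i, j) = (i', j') ∧ (r, s) = (r', s')) ∨
        ((i, j) = (r', s') ∧ (r, s) = (i', j'))) ∧
      -- the sums y_{ij} + y_{rs} are pairwise distinct up to commutativity
      (∀ i j r s i' j' r' s', y i j + y r s = y i' j' + y r' s' →
        ((i, j) = (i', j') ∧ (r, s) = (r', s')) ∨
        ((i, j) = (r', s') ∧ (r, s) = (i', j'))) ∧
      -- sums of different kinds are distinct from each other
      (∀ i j r s i' j' r' s', (r, s) ≠ (i, j) →
        x i j + y r s ≠ x i' j' + x r' s') ∧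
      (∀ i j r s i' j' r' s', (r, s) ≠ (i, j) →
        x i j + y r s ≠ y i' j' + y r' s') ∧
      (∀ i j r s i' j' r' s', x i j + x r s ≠ y i' j' + y r' s') ∧
      -- none of these sums equals any z_t
      (∀ i j r s t, (r, s) ≠ (i, j) → x i j + y r s ≠ z t) ∧
      (∀ i j r s t, x i j + x r s ≠ z t) ∧
      (∀ i j r s t, y i j + y r s ≠ z t) ∧
      -- none of these sums equals any x_{tu} or y_{tu}
      (∀ i j r s t u, (r, s) ≠ (i, j) →
        x i j + y r s ≠ x t u ∧ x i j + y r s ≠ y t u) ∧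
      (∀ i j r s t u, x i j + x r s ≠ x t u ∧ x i j + x r s ≠ y t u) ∧
      (∀ i j r s t u, y i j + y r s ≠ x t u ∧ y i j + y r s ≠ y t u) :=
  generic_sums_exist_general n N h
end

section
/- Let S ⊆ ℕ be a finite set with 0 ∈ S. Suppose there exist an integer m ≥ 1 and a set T of residue classes in ℤ/mℤ such that every positive element of S has residue class in T, while for all t, t′ ∈ T the class t + t′ does not lie in T. Then S admits no nontrivial Minkowski decomposition: there are no sets A, B ⊆ ℕ with A ≠ {0}, B ≠ {0}, and A + B = S; equivalently, the Boolean polynomial with support S is irreducible. -/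
/-!
If `A + B = S` with `0 ∈ S`, then `0` lies in both summands (the only way to write `0` as a sum of
naturals is `0 + 0`), so `A, B ⊆ S`. Nontrivial summands then contain nonzero `a ∈ A`, `b ∈ B`,
and `a`, `b`, `a + b` are all nonzero elements of `S`. Their residues lie in `T`, yet the residue
of `a + b` is the sum of the other two, contradicting that `T` is sum-free.
-/

open Pointwise

namespace Set

theorem exists_mem_ne_zero_of_zero_mem_of_ne_singleton {M : Type*} [Zero M] {A : Set M}
    (h0 : (0 : M) ∈ A) (hA : A ≠ {0}) : ∃ a ∈ A, a ≠ 0 := by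
  by_contra! h
  exact hA (eq_singleton_iff_unique_mem.mpr ⟨h0, h⟩)

variable {M : Type*} [AddCommMonoid M] [Subsingleton (AddUnits M)]

theorem zero_mem_left_and_right_of_zero_mem_add {A B : Set M} (h : (0 : M) ∈ A + B) :
    0 ∈ A ∧ 0 ∈ B := by
  obtain ⟨a, ha, b, hb, hab⟩ := mem_add.mp h
  obtain ⟨rfl, rfl⟩ := add_eq_zero.mp hab
  exact ⟨ha, hb⟩

theorem eq_singleton_zero_or_of_add_eq_of_map_mem_sumFree {G : Type*} [AddZeroClass G]
    (φ : M →+ G) {T : Set G} (hT : ∀ t ∈ T, ∀ t' ∈ T, t + t' ∉ T)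
    {A B S : Set M} (h0 : (0 : M) ∈ S) (hS : ∀ s ∈ S, s ≠ 0 → φ s ∈ T) (hAB : A + B = S) :
    A = {0} ∨ B = {0} := by
  obtain ⟨hA0, hB0⟩ := zero_mem_left_and_right_of_zero_mem_add (hAB ▸ h0)
  by_contra! hne
  obtain ⟨a, ha, ha0⟩ := exists_mem_ne_zero_of_zero_mem_of_ne_singleton hA0 hne.1
  obtain ⟨b, hb, hb0⟩ := exists_mem_ne_zero_of_zero_mem_of_ne_singleton hB0 hne.2
  have haS : a ∈ S := hAB ▸ subset_add_left A hB0 ha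
  have hbS : b ∈ S := hAB ▸ subset_add_right B hA0 hb
  have habS : a + b ∈ S := hAB ▸ add_mem_add ha hb
  have hab0 : a + b ≠ 0 := fun h => ha0 (add_eq_zero.mp h).1
  exact hT _ (hS a haS ha0) _ (hS b hbS hb0) (map_add φ a b ▸ hS _ habS hab0)

end Set

theorem boolean_irreducible_of_residue_classes_general (S : Finset ℕ) (h0 : 0 ∈ S)
    (m : ℕ) (T : Set (ZMod m))
    (hin : ∀ s ∈ S, 0 < s → ((s : ZMod m) ∈ T))
    (hsum : ∀ t ∈ T, ∀ t' ∈ T, t + t' ∉ T) :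
    ¬ ∃ A B : Set ℕ, A ≠ {0} ∧ B ≠ {0} ∧ A + B = (S : Set ℕ) := by
  rintro ⟨A, B, hA, hB, hAB⟩
  have hin' : ∀ s ∈ (S : Set ℕ), s ≠ 0 → Nat.castAddMonoidHom (ZMod m) s ∈ T :=
    fun s hs hs0 => hin s hs (Nat.pos_of_ne_zero hs0)
  exact (Set.eq_singleton_zero_or_of_add_eq_of_map_mem_sumFree _ hsum
    (Finset.mem_coe.mpr h0) hin' hAB).elim hA hB

/-- Proposition 8 (second part): if all positive elements of `S` have residue
classes mod `m` lying in a set `T` of residue classes such that the sum of any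
two classes of `T` lies outside `T`, then `S` admits no nontrivial Minkowski
decomposition `S = A + B`. -/
theorem boolean_irreducible_of_residue_classes (S : Finset ℕ) (h0 : 0 ∈ S)
    (m : ℕ) (hm : 1 ≤ m) (T : Set (ZMod m))
    (hin : ∀ s ∈ S, 0 < s → ((s : ZMod m) ∈ T))
    (hsum : ∀ t ∈ T, ∀ t' ∈ T, t + t' ∉ T) :
    ¬ ∃ A B : Set ℕ, A ≠ {0} ∧ B ≠ {0} ∧ A + B = (S : Set ℕ) :=
  boolean_irreducible_of_residue_classes_general S h0 m T hin hsum
end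

section
/- Let f and g be tropical polynomials with nonnegative real coefficients and let d be a positive integer such that f and g have at least one common multiple of degree d with nonnegative coefficients — i.e. there exists a degree-d tropical polynomial p with nonnegative coefficients and tropical polynomials u, v with nonnegative coefficients such that p = f ⊗ u = g ⊗ v. Then among all such common multiples of degree d there is a unique least one: a common multiple p* of degree d with nonnegative coefficients such that for every common multiple p of f and g of degree d with nonnegative coefficients, each coefficient of p* is ≤ (as a real number) the corresponding coefficient of p. -/
/-- `p` (coefficients in degrees `0,…,d`) is a common multiple, with nonnegative
coefficients, of the tropical polynomials with coefficients `F` (degree `df`) and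
`G` (degree `dg`): it is a tropical product of `F` with some nonnegative tropical
polynomial and of `G` with some nonnegative tropical polynomial. -/
def IsCommonMultiple (df dg d : ℕ) (F G : ℕ → ℝ) (p : ℕ → ℝ) : Prop :=
  (∀ j ≤ d, 0 ≤ p j) ∧
  (∃ du : ℕ, df + du = d ∧ ∃ u : ℕ → ℝ, (∀ i ≤ du, 0 ≤ u i) ∧
    ∀ j ≤ d, p j = tropConv df du F u j) ∧
  (∃ dv : ℕ, dg + dv = d ∧ ∃ v : ℕ → ℝ, (∀ i ≤ dv, 0 ≤ v i) ∧
    ∀ j ≤ d, p j = tropConv dg dv G v j)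

namespace TropAux

/-- The set appearing in the definition of `tropConv`. -/
def convSet (m k : ℕ) (a b : ℕ → ℝ) (j : ℕ) : Set ℝ :=
  {x : ℝ | ∃ i : ℕ, i ≤ m ∧ i ≤ j ∧ j - i ≤ k ∧ x = a i + b (j - i)}

lemma tropConv_def (m k : ℕ) (a b : ℕ → ℝ) (j : ℕ) :
    tropConv m k a b j = sInf (convSet m k a b j) := rfl

lemma convSet_nonempty (m k : ℕ) (a b : ℕ → ℝ) {j : ℕ} (hj : j ≤ m + k) :
    (convSet m k a b j).Nonempty := by
  refine ⟨a (min j m) + b (j - min j m), min j m, min_le_right _ _, min_le_left _ _, ?_, rfl⟩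
  omega

lemma convSet_lb (m k : ℕ) {a b : ℕ → ℝ} (ha : ∀ i ≤ m, 0 ≤ a i) (hb : ∀ i ≤ k, 0 ≤ b i)
    (j : ℕ) : ∀ x ∈ convSet m k a b j, (0 : ℝ) ≤ x := by
  rintro x ⟨i, him, hij, hjk, rfl⟩
  have h1 := ha i him
  have h2 := hb _ hjk
  linarith

lemma convSet_bddBelow (m k : ℕ) {a b : ℕ → ℝ} (ha : ∀ i ≤ m, 0 ≤ a i)
    (hb : ∀ i ≤ k, 0 ≤ b i) (j : ℕ) : BddBelow (convSet m k a b j) :=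
  ⟨0, fun x hx => convSet_lb m k ha hb j x hx⟩

lemma tropConv_nonneg (m k : ℕ) {a b : ℕ → ℝ} (ha : ∀ i ≤ m, 0 ≤ a i)
    (hb : ∀ i ≤ k, 0 ≤ b i) (j : ℕ) : 0 ≤ tropConv m k a b j :=
  Real.sInf_nonneg (convSet_lb m k ha hb j)

lemma tropConv_le (m k : ℕ) {a b : ℕ → ℝ} (ha : ∀ i ≤ m, 0 ≤ a i)
    (hb : ∀ i ≤ k, 0 ≤ b i) {j i : ℕ} (him : i ≤ m) (hij : i ≤ j) (hjk : j - i ≤ k) :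
    tropConv m k a b j ≤ a i + b (j - i) :=
  csInf_le (convSet_bddBelow m k ha hb j) ⟨i, him, hij, hjk, rfl⟩

lemma le_tropConv (m k : ℕ) (a b : ℕ → ℝ) {j : ℕ} (hj : j ≤ m + k) {c : ℝ}
    (h : ∀ i : ℕ, i ≤ m → i ≤ j → j - i ≤ k → c ≤ a i + b (j - i)) :
    c ≤ tropConv m k a b j := by
  refine le_csInf (convSet_nonempty m k a b hj) ?_
  rintro x ⟨i, him, hij, hjk, rfl⟩
  exact h i him hij hjk

/-- Monotonicity of `tropConv` in the second sequence (on the relevant range). -/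
lemma tropConv_mono (m k : ℕ) {a b b' : ℕ → ℝ} (ha : ∀ i ≤ m, 0 ≤ a i)
    (hb : ∀ i ≤ k, 0 ≤ b i) {j : ℕ} (hj : j ≤ m + k)
    (hbb : ∀ i ≤ k, b i ≤ b' i) :
    tropConv m k a b j ≤ tropConv m k a b' j := by
  refine le_tropConv m k a b' hj fun i him hij hjk => ?_
  calc tropConv m k a b j ≤ a i + b (j - i) := tropConv_le m k ha hb him hij hjk
    _ ≤ a i + b' (j - i) := by linarith [hbb _ hjk]

/-- Key lemma: if every element of a nonempty family `CM` is, on degrees `≤ d`, a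
tropical multiple of `F` (with a nonnegative cofactor of degree `k`), then so is the
coefficientwise infimum of the family. -/
lemma inf_is_multiple (m k d : ℕ) (hmk : m + k = d) (F : ℕ → ℝ) (hF : ∀ i ≤ m, 0 ≤ F i)
    (CM : Set (ℕ → ℝ)) (hne : CM.Nonempty)
    (hwit : ∀ q ∈ CM, ∃ u : ℕ → ℝ, (∀ i ≤ k, 0 ≤ u i) ∧
      ∀ j ≤ d, q j = tropConv m k F u j) :
    ∃ u : ℕ → ℝ, (∀ i ≤ k, 0 ≤ u i) ∧
      ∀ j ≤ d, sInf {x | ∃ q ∈ CM, x = q j} = tropConv m k F u j := by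
  classical
  set U : Set (ℕ → ℝ) := {u | (∀ i ≤ k, 0 ≤ u i) ∧
    ∃ q ∈ CM, ∀ j ≤ d, q j = tropConv m k F u j} with hU
  obtain ⟨q0, hq0⟩ := hne
  obtain ⟨u0, hu0n, hu0⟩ := hwit q0 hq0
  have hUne : U.Nonempty := ⟨u0, hu0n, q0, hq0, hu0⟩
  -- every element of `CM` is nonnegative on degrees ≤ d
  have hCMn : ∀ q ∈ CM, ∀ j ≤ d, 0 ≤ q j := by
    intro q hq j hj
    obtain ⟨u, hun, hu⟩ := hwit q hq
    rw [hu j hj]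
    exact tropConv_nonneg m k hF hun j
  set P : ℕ → ℝ := fun j => sInf {x | ∃ q ∈ CM, x = q j} with hP
  set w : ℕ → ℝ := fun i => sInf {x | ∃ u ∈ U, x = u i} with hw
  have hwn : ∀ i ≤ k, 0 ≤ w i := by
    intro i hi
    refine Real.sInf_nonneg ?_
    rintro x ⟨u, hu, rfl⟩
    exact hu.1 i hi
  have hwle : ∀ u ∈ U, ∀ i ≤ k, w i ≤ u i := by
    intro u hu i hi
    refine csInf_le ⟨0, ?_⟩ ⟨u, hu, rfl⟩
    rintro x ⟨u', hu', rfl⟩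
    exact hu'.1 i hi
  have hPle : ∀ q ∈ CM, ∀ j ≤ d, P j ≤ q j := by
    intro q hq j hj
    refine csInf_le ⟨0, ?_⟩ ⟨q, hq, rfl⟩
    rintro x ⟨q', hq', rfl⟩
    exact hCMn q' hq' j hj
  refine ⟨w, hwn, fun j hj => ?_⟩
  have hjd : j ≤ m + k := by omega
  apply le_antisymm
  · -- P j ≤ tropConv m k F w j
    refine le_tropConv m k F w hjd fun i him hij hjk => ?_
    -- show P j - F i ≤ w (j - i)
    have : P j - F i ≤ w (j - i) := by
      refine le_csInf ?_ ?_
      · obtain ⟨u0', hu0'⟩ := hUne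
        exact ⟨u0' (j - i), u0', hu0', rfl⟩
      rintro x ⟨u, hu, rfl⟩
      obtain ⟨hun, q, hq, hqe⟩ := hu
      have h1 : tropConv m k F u j ≤ F i + u (j - i) :=
        tropConv_le m k hF hun him hij hjk
      have h2 : P j ≤ q j := hPle q hq j hj
      rw [hqe j hj] at h2
      linarith
    linarith
  · -- tropConv m k F w j ≤ P j
    refine le_csInf ⟨q0 j, q0, hq0, rfl⟩ ?_
    rintro x ⟨q, hq, rfl⟩
    obtain ⟨u, hun, hqe⟩ := hwit q hq
    have huU : u ∈ U := ⟨hun, q, hq, hqe⟩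
    calc tropConv m k F w j ≤ tropConv m k F u j :=
          tropConv_mono m k hF hwn hjd (fun i hi => hwle u huU i hi)
      _ = q j := (hqe j hj).symm

end TropAux

open TropAux in
/-- Two nonnegative tropical polynomials having a common multiple of degree `d`
with nonnegative coefficients have a unique least such common multiple
(coefficientwise). -/
theorem unique_least_common_multiple (df dg d : ℕ) (hd : 1 ≤ d)
    (F G : ℕ → ℝ) (hF : ∀ i ≤ df, 0 ≤ F i) (hG : ∀ i ≤ dg, 0 ≤ G i)
    (hex : ∃ p : ℕ → ℝ, IsCommonMultiple df dg d F G p) :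
    ∃ p : ℕ → ℝ, IsCommonMultiple df dg d F G p ∧
      (∀ q : ℕ → ℝ, IsCommonMultiple df dg d F G q → ∀ j ≤ d, p j ≤ q j) ∧
      (∀ p' : ℕ → ℝ, IsCommonMultiple df dg d F G p' →
        (∀ q : ℕ → ℝ, IsCommonMultiple df dg d F G q → ∀ j ≤ d, p' j ≤ q j) →
        ∀ j ≤ d, p' j = p j) := by
  classical
  set CM : Set (ℕ → ℝ) := {q | IsCommonMultiple df dg d F G q} with hCM
  obtain ⟨q0, hq0⟩ := hex
  have hq0' : q0 ∈ CM := hq0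
  obtain ⟨hq0n, ⟨du, hdu, u0, hu0n, hu0⟩, ⟨dv, hdv, v0, hv0n, hv0⟩⟩ := hq0
  set P : ℕ → ℝ := fun j => sInf {x | ∃ q ∈ CM, x = q j} with hP
  -- every common multiple's F-cofactor has degree du, and G-cofactor degree dv
  have hwitF : ∀ q ∈ CM, ∃ u : ℕ → ℝ, (∀ i ≤ du, 0 ≤ u i) ∧
      ∀ j ≤ d, q j = tropConv df du F u j := by
    intro q hq
    obtain ⟨-, ⟨du', hdu', u, hun, hu⟩, -⟩ := hq
    have : du' = du := by omega
    subst this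
    exact ⟨u, hun, hu⟩
  have hwitG : ∀ q ∈ CM, ∃ v : ℕ → ℝ, (∀ i ≤ dv, 0 ≤ v i) ∧
      ∀ j ≤ d, q j = tropConv dg dv G v j := by
    intro q hq
    obtain ⟨-, -, ⟨dv', hdv', v, hvn, hv⟩⟩ := hq
    have : dv' = dv := by omega
    subst this
    exact ⟨v, hvn, hv⟩
  obtain ⟨u, hun, huP⟩ := inf_is_multiple df du d hdu F hF CM ⟨q0, hq0'⟩ hwitF
  obtain ⟨v, hvn, hvP⟩ := inf_is_multiple dg dv d hdv G hG CM ⟨q0, hq0'⟩ hwitG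
  have hPn : ∀ j ≤ d, 0 ≤ P j := by
    intro j hj
    have hPj : P j = tropConv df du F u j := huP j hj
    rw [hPj]
    exact tropConv_nonneg df du hF hun j
  have hPle : ∀ q : ℕ → ℝ, IsCommonMultiple df dg d F G q → ∀ j ≤ d, P j ≤ q j := by
    intro q hq j hj
    refine csInf_le ⟨0, ?_⟩ ⟨q, hq, rfl⟩
    rintro x ⟨q', hq', rfl⟩
    exact hq'.1 j hj
  have hPCM : IsCommonMultiple df dg d F G P :=
    ⟨hPn, ⟨du, hdu, u, hun, huP⟩, ⟨dv, hdv, v, hvn, hvP⟩⟩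
  refine ⟨P, hPCM, hPle, ?_⟩
  intro p' hp' hp'le j hj
  exact le_antisymm (hp'le P hPCM j hj) (hPle p' hp' j hj)
end

section
/- For every integer n ≥ 2, set S = {0, 1, …, 2n+1} ⊆ ℕ. Then the sets {0, n} and {0, n+1} each Minkowski-divide S: there exist C, D ⊆ ℕ with {0, n} + C = S and {0, n+1} + D = S. However, their Minkowski sum {0, n} + {0, n+1} = {0, n, n+1, 2n+1} does not divide S: there is no set E ⊆ ℕ with {0, n, n+1, 2n+1} + E = S. (In the language of Boolean polynomials: both 1 + xⁿ and 1 + x^{n+1} divide 1 + x + x² + ⋯ + x^{2n+1}, but their product does not.) -/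
open Pointwise

/-- Both `1 + xⁿ` and `1 + x^{n+1}` divide `1 + x + ⋯ + x^{2n+1}` (as Boolean
polynomials, i.e. their supports Minkowski-divide `{0,…,2n+1}`), but their product,
with support `{0, n, n+1, 2n+1}`, does not. -/
theorem gcd_not_unique (n : ℕ) (hn : 2 ≤ n) :
    (∃ C : Finset ℕ, ({0, n} : Finset ℕ) + C = Finset.range (2 * n + 2)) ∧
    (∃ D : Finset ℕ, ({0, n + 1} : Finset ℕ) + D = Finset.range (2 * n + 2)) ∧
    (({0, n} : Finset ℕ) + ({0, n + 1} : Finset ℕ)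
      = ({0, n, n + 1, 2 * n + 1} : Finset ℕ)) ∧
    ¬ ∃ E : Finset ℕ,
        ({0, n, n + 1, 2 * n + 1} : Finset ℕ) + E = Finset.range (2 * n + 2) := by
  refine ⟨⟨Finset.range (n + 2), ?_⟩, ⟨Finset.range (n + 1), ?_⟩, ?_, ?_⟩
  · ext x
    simp only [Finset.mem_add, Finset.mem_insert, Finset.mem_singleton,
      Finset.mem_range]
    constructor
    · rintro ⟨a, ha, b, hb, rfl⟩; omega
    · intro hx
      rcases le_or_gt x (n + 1) with h | h
      · exact ⟨0, Or.inl rfl, x, by omega, by omega⟩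
      · exact ⟨n, Or.inr rfl, x - n, by omega, by omega⟩
  · ext x
    simp only [Finset.mem_add, Finset.mem_insert, Finset.mem_singleton,
      Finset.mem_range]
    constructor
    · rintro ⟨a, ha, b, hb, rfl⟩; omega
    · intro hx
      rcases le_or_gt x n with h | h
      · exact ⟨0, Or.inl rfl, x, by omega, by omega⟩
      · exact ⟨n + 1, Or.inr rfl, x - (n + 1), by omega, by omega⟩
  · ext x
    simp only [Finset.mem_add, Finset.mem_insert, Finset.mem_singleton]
    constructor
    · rintro ⟨a, ha, b, hb, rfl⟩; omega
    · rintro (h | h | h | h)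
      · exact ⟨0, Or.inl rfl, 0, Or.inl rfl, by omega⟩
      · exact ⟨n, Or.inr rfl, 0, Or.inl rfl, by omega⟩
      · exact ⟨0, Or.inl rfl, n + 1, Or.inr rfl, by omega⟩
      · exact ⟨n, Or.inr rfl, n + 1, Or.inr rfl, by omega⟩
  · rintro ⟨E, hE⟩
    have h1 : (1 : ℕ) ∈ ({0, n, n + 1, 2 * n + 1} : Finset ℕ) + E := by
      rw [hE, Finset.mem_range]; omega
    rw [Finset.mem_add] at h1
    obtain ⟨a, ha, b, hb, hab⟩ := h1
    simp only [Finset.mem_insert, Finset.mem_singleton] at ha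
    have hb1 : b = 1 := by omega
    subst hb1
    have h2 : (2 * n + 2 : ℕ) ∈ ({0, n, n + 1, 2 * n + 1} : Finset ℕ) + E := by
      rw [Finset.mem_add]
      exact ⟨2 * n + 1, by simp, 1, hb, by omega⟩
    rw [hE, Finset.mem_range] at h2
    omega
end
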